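/- arXiv:1309.7268 — 4 statements merged into one kernel-verified Lean document; each statement's English description precedes it below -/
import Mathlib

section
/- Let n ≥ 1 and let a_1,…,a_n and b_1,…,b_n be positive reals satisfying the telescoping condition a_{i+1} = a_i + b_i for 1 ≤ i ≤ n−1. If X_1,…,X_n are independent random variables with X_i having the Beta(a_i, b_i) distribution, then the product ∏_{i=1}^n X_i has the Beta(a_1, b_1 + b_2 + ⋯ + b_n) distribution. -/
open MeasureTheory ProbabilityTheory Real Filter Finset

/-- The Beta(a,b) distribution on ℝ: density x^(a-1)(1-x)^(b-1)/B(a,b) on (0,1),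
where B(a,b) = Γ(a)Γ(b)/Γ(a+b). -/
noncomputable def betaMeasure (a b : ℝ) : Measure ℝ :=
  volume.withDensity fun x =>
    ENNReal.ofReal (if x ∈ Set.Ioo (0 : ℝ) 1 then
      x ^ (a - 1) * (1 - x) ^ (b - 1) / (Real.Gamma a * Real.Gamma b / Real.Gamma (a + b))
    else 0)

/-- `X` has the Beta(a,b) distribution under `P`. -/
def HasBetaDist {Ω : Type*} [MeasurableSpace Ω] (P : Measure Ω) (X : Ω → ℝ) (a b : ℝ) : Prop :=
  Measurable X ∧ Measure.map X P = _root_.betaMeasure a b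

/-!
For independent `Y ~ Beta(a, b)` and `Z ~ Beta(a + b, c)`, the law of `Y * Z` is the
multiplicative convolution of the two laws, with density `u ↦ ∫ f(u / y) g(y) dy / |y|`.
For `0 < u < y < 1` the integrand is `u^(a-1) (y-u)^(b-1) (1-y)^(c-1)` up to the normalizing
constants, and the affine substitution `y = u + (1 - u) t` turns its integral into
`(1 - u)^(b+c-1)` times a constant. So the law of `Y * Z` is a multiple of `Beta(a, b + c)`,
and as both are probability measures they coincide; no Beta-function identity is needed.
The theorem follows by induction on `n`, splitting off `X₁`: by the telescoping condition,
`X₂ ⋯ Xₙ ~ Beta(a₂, b₂ + ⋯ + bₙ)` with `a₂ = a₁ + b₁`.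
-/

open scoped ENNReal

theorem Real.lintegral_comp_mul_left (f : ℝ → ℝ≥0∞) {s : ℝ} (hs : s ≠ 0) :
    ∫⁻ t, f (s * t) = ENNReal.ofReal |s⁻¹| * ∫⁻ y, f y := by
  rw [← smul_eq_mul, ← lintegral_smul_measure, ← Real.map_volume_mul_left hs]
  exact (lintegral_map_equiv f (Homeomorph.mulLeft₀ s hs).toMeasurableEquiv).symm

theorem Real.mconv_withDensity {f g : ℝ → ℝ≥0∞} (hf : Measurable f) (hg : Measurable g) :
    volume.withDensity f ∗ₘ volume.withDensity g =
      volume.withDensity fun u => ∫⁻ y, ENNReal.ofReal |y⁻¹| * f (u / y) * g y := by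
  refine Measure.ext_of_lintegral _ fun φ hφ => ?_
  have inner : ∀ᵐ y, ∫⁻ x, f x * g y * φ (x * y)
      = ∫⁻ u, ENNReal.ofReal |y⁻¹| * f (u / y) * g y * φ u := by
    filter_upwards [Measure.ae_ne volume 0] with y hy
    have := Real.lintegral_comp_mul_left (fun u => f (u / y) * g y * φ u) hy
    simp only [mul_div_cancel_left₀ _ hy] at this
    rw [← lintegral_const_mul _ (by fun_prop)] at this
    simpa only [mul_comm _ y, mul_assoc] using this
  rw [Measure.lintegral_mconv_eq_lintegral_prod hφ, prod_withDensity hf hg,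
    lintegral_withDensity_eq_lintegral_mul _ (by fun_prop) (by fun_prop),
    lintegral_withDensity_eq_lintegral_mul _ (by fun_prop) hφ, lintegral_prod_symm _ (by fun_prop)]
  simp only [Pi.mul_apply]
  rw [lintegral_congr_ae inner, lintegral_lintegral_swap (by fun_prop)]
  exact lintegral_congr fun u => lintegral_mul_const _ (by fun_prop)

theorem MeasureTheory.Measure.eq_of_eq_smul_of_eq_smul {α : Type*} [MeasurableSpace α]
    {μ ν ρ : Measure α} [IsProbabilityMeasure μ] [IsProbabilityMeasure ν] {k l : ℝ≥0∞}
    (hμ : μ = k • ρ) (hν : ν = l • ρ) : μ = ν := by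
  have hk : k * ρ Set.univ = 1 := by simpa [hμ] using measure_univ (μ := μ)
  have hl : l * ρ Set.univ = 1 := by simpa [hν] using measure_univ (μ := ν)
  rw [hμ, hν, ENNReal.eq_inv_of_mul_eq_one_left hk, ENNReal.eq_inv_of_mul_eq_one_left hl]

theorem inv_mul_rpow_div_mul_rpow_sub_div {a b u y : ℝ} (hu : 0 < u) (huy : u < y) :
    y⁻¹ * ((u / y) ^ (a - 1) * (1 - u / y) ^ (b - 1)) * y ^ (a + b - 1) =
      u ^ (a - 1) * (y - u) ^ (b - 1) := by
  have hy : 0 < y := hu.trans huy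
  rw [div_rpow hu.le hy.le, show 1 - u / y = (y - u) / y by field_simp,
    div_rpow (sub_nonneg.2 huy.le) hy.le, show a + b - 1 = (a - 1) + (b - 1) + 1 by ring,
    rpow_add_one hy.ne', rpow_add hy]
  have : 0 < y ^ (a - 1) := rpow_pos_of_pos hy _
  have : 0 < y ^ (b - 1) := rpow_pos_of_pos hy _
  field_simp

noncomputable def unnormalizedBetaPDF (a b : ℝ) : ℝ → ℝ≥0∞ :=
  (Set.Ioo 0 1).indicator fun x => ENNReal.ofReal (x ^ (a - 1) * (1 - x) ^ (b - 1))

theorem unnormalizedBetaPDF_of_mem {a b x : ℝ} (hx : x ∈ Set.Ioo 0 1) :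
    unnormalizedBetaPDF a b x = ENNReal.ofReal (x ^ (a - 1) * (1 - x) ^ (b - 1)) :=
  Set.indicator_of_mem hx _

theorem unnormalizedBetaPDF_of_notMem {a b x : ℝ} (hx : x ∉ Set.Ioo 0 1) :
    unnormalizedBetaPDF a b x = 0 :=
  Set.indicator_of_notMem hx _

@[fun_prop]
theorem measurable_unnormalizedBetaPDF (a b : ℝ) : Measurable (unnormalizedBetaPDF a b) :=
  (Measurable.ennreal_ofReal (by fun_prop)).indicator measurableSet_Ioo

theorem betaMeasure_eq_smul_withDensity (a b : ℝ) :
    _root_.betaMeasure a b =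
      ENNReal.ofReal (beta a b)⁻¹ • volume.withDensity (unnormalizedBetaPDF a b) := by
  rw [← withDensity_smul _ (measurable_unnormalizedBetaPDF a b), _root_.betaMeasure]
  congr 1
  funext x
  by_cases hx : x ∈ Set.Ioo (0 : ℝ) 1
  · have : 0 ≤ x ^ (a - 1) * (1 - x) ^ (b - 1) :=
      mul_nonneg (rpow_nonneg hx.1.le _) (rpow_nonneg (by linarith [hx.2]) _)
    rw [if_pos hx, Pi.smul_apply, unnormalizedBetaPDF_of_mem hx, smul_eq_mul,
      ← ENNReal.ofReal_mul' this, beta, div_eq_inv_mul]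
  · rw [if_neg hx, Pi.smul_apply, unnormalizedBetaPDF_of_notMem hx, smul_zero,
      ENNReal.ofReal_zero]

theorem betaMeasure_eq_probabilityTheory_betaMeasure (a b : ℝ) :
    _root_.betaMeasure a b = ProbabilityTheory.betaMeasure a b := by
  rw [_root_.betaMeasure, ProbabilityTheory.betaMeasure]
  congr 1
  funext x
  simp only [betaPDF_eq, beta, Set.mem_Ioo]
  split_ifs <;> ring_nf

theorem isProbabilityMeasure_betaMeasure {a b : ℝ} (ha : 0 < a) (hb : 0 < b) :
    IsProbabilityMeasure (_root_.betaMeasure a b) :=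
  betaMeasure_eq_probabilityTheory_betaMeasure a b ▸ isProbabilityMeasureBeta ha hb

theorem lintegral_Ioo_sub_rpow_mul_sub_rpow {u v : ℝ} (huv : u < v) (b c : ℝ) :
    ∫⁻ y in Set.Ioo u v, ENNReal.ofReal ((y - u) ^ (b - 1) * (v - y) ^ (c - 1)) =
      ENNReal.ofReal ((v - u) ^ (b + c - 1)) * ∫⁻ t, unnormalizedBetaPDF b c t := by
  set s := v - u
  have hs : 0 < s := sub_pos.2 huv
  set F := (Set.Ioo u v).indicator fun y =>
    ENNReal.ofReal ((y - u) ^ (b - 1) * (v - y) ^ (c - 1))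
  have hF : ∀ t, F (u + s * t) =
      ENNReal.ofReal (s ^ (b + c - 2)) * unnormalizedBetaPDF b c t := by
    intro t
    have hmem : u + s * t ∈ Set.Ioo u v ↔ t ∈ Set.Ioo 0 1 := by
      simp only [Set.mem_Ioo, lt_add_iff_pos_right, mul_pos_iff_of_pos_left hs, s]
      constructor <;> rintro ⟨h1, h2⟩ <;> refine ⟨h1, ?_⟩ <;> nlinarith
    simp only [F]
    by_cases ht : t ∈ Set.Ioo 0 1
    · rw [Set.indicator_of_mem (hmem.2 ht), unnormalizedBetaPDF_of_mem ht,
        ← ENNReal.ofReal_mul (rpow_nonneg hs.le _), add_sub_cancel_left,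
        show v - (u + s * t) = s * (1 - t) by ring, mul_rpow hs.le ht.1.le,
        mul_rpow hs.le (by linarith [ht.2]), show b + c - 2 = (b - 1) + (c - 1) by ring,
        rpow_add hs]
      ring_nf
    · rw [Set.indicator_of_notMem (mt hmem.1 ht), unnormalizedBetaPDF_of_notMem ht, mul_zero]
  have hsub : ∫⁻ t, F (u + s * t) = ENNReal.ofReal s⁻¹ * ∫⁻ y, F y := by
    rw [Real.lintegral_comp_mul_left (fun t => F (u + t)) hs.ne', abs_of_pos (inv_pos.2 hs),
      lintegral_add_left_eq_self]
  calc ∫⁻ y in Set.Ioo u v, ENNReal.ofReal ((y - u) ^ (b - 1) * (v - y) ^ (c - 1))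
      = ∫⁻ y, F y := (lintegral_indicator measurableSet_Ioo _).symm
    _ = ENNReal.ofReal s * ∫⁻ t, F (u + s * t) := by
      rw [hsub, ← mul_assoc, ← ENNReal.ofReal_mul hs.le, mul_inv_cancel₀ hs.ne',
        ENNReal.ofReal_one, one_mul]
    _ = ENNReal.ofReal (s ^ (b + c - 1)) * ∫⁻ t, unnormalizedBetaPDF b c t := by
      rw [lintegral_congr hF, lintegral_const_mul' _ _ ENNReal.ofReal_ne_top, ← mul_assoc,
        ← ENNReal.ofReal_mul hs.le, show b + c - 1 = 1 + (b + c - 2) by ring, rpow_add hs,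
        rpow_one]

theorem unnormalizedBetaPDF_div_mul_eq_zero (a b c : ℝ) {u y : ℝ}
    (h : ¬(0 < u ∧ u < y ∧ y < 1)) :
    ENNReal.ofReal |y⁻¹| * unnormalizedBetaPDF a b (u / y) *
      unnormalizedBetaPDF (a + b) c y = 0 := by
  by_cases hy : y ∈ Set.Ioo 0 1
  · rw [unnormalizedBetaPDF_of_notMem, mul_zero, zero_mul]
    rintro ⟨h0, h1⟩
    exact h ⟨(div_pos_iff_of_pos_right hy.1).1 h0, (div_lt_one hy.1).1 h1, hy.2⟩
  · rw [unnormalizedBetaPDF_of_notMem hy, mul_zero]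

theorem lintegral_unnormalizedBetaPDF_div_mul (a b c u : ℝ) :
    ∫⁻ y, ENNReal.ofReal |y⁻¹| * unnormalizedBetaPDF a b (u / y) *
        unnormalizedBetaPDF (a + b) c y =
      (∫⁻ t, unnormalizedBetaPDF b c t) * unnormalizedBetaPDF a (b + c) u := by
  by_cases hu : u ∈ Set.Ioo 0 1
  · have hpt : ∀ y, ENNReal.ofReal |y⁻¹| * unnormalizedBetaPDF a b (u / y) *
          unnormalizedBetaPDF (a + b) c y = ENNReal.ofReal (u ^ (a - 1)) *
          (Set.Ioo u 1).indicator
            (fun y => ENNReal.ofReal ((y - u) ^ (b - 1) * (1 - y) ^ (c - 1))) y := by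
      intro y
      by_cases hy : y ∈ Set.Ioo u 1
      · have hy0 : 0 < y := hu.1.trans hy.1
        have huy : u / y ∈ Set.Ioo 0 1 := ⟨div_pos hu.1 hy0, (div_lt_one hy0).2 hy.1⟩
        rw [unnormalizedBetaPDF_of_mem huy, unnormalizedBetaPDF_of_mem ⟨hy0, hy.2⟩,
          Set.indicator_of_mem hy, abs_of_pos (inv_pos.2 hy0),
          ← ENNReal.ofReal_mul (inv_nonneg.2 hy0.le),
          ← ENNReal.ofReal_mul (mul_nonneg (inv_nonneg.2 hy0.le) (mul_nonneg
            (rpow_nonneg huy.1.le _) (rpow_nonneg (sub_nonneg.2 huy.2.le) _))),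
          ← ENNReal.ofReal_mul (rpow_nonneg hu.1.le _)]
        congr 1
        linear_combination (1 - y) ^ (c - 1) * inv_mul_rpow_div_mul_rpow_sub_div hu.1 hy.1
      · rw [unnormalizedBetaPDF_div_mul_eq_zero a b c (fun h => hy h.2),
          Set.indicator_of_notMem hy, mul_zero]
    rw [lintegral_congr hpt, lintegral_const_mul' _ _ ENNReal.ofReal_ne_top,
      lintegral_indicator measurableSet_Ioo, lintegral_Ioo_sub_rpow_mul_sub_rpow hu.2,
      unnormalizedBetaPDF_of_mem hu, ENNReal.ofReal_mul (rpow_nonneg hu.1.le _)]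
    ring
  · have hzero : ∀ y, ENNReal.ofReal |y⁻¹| * unnormalizedBetaPDF a b (u / y) *
        unnormalizedBetaPDF (a + b) c y = 0 := fun y =>
      unnormalizedBetaPDF_div_mul_eq_zero a b c fun h => hu ⟨h.1, h.2.1.trans h.2.2⟩
    rw [lintegral_congr hzero, lintegral_zero, unnormalizedBetaPDF_of_notMem hu, mul_zero]

theorem betaMeasure_mconv_betaMeasure {a b c : ℝ} (ha : 0 < a) (hb : 0 < b) (hc : 0 < c) :
    _root_.betaMeasure a b ∗ₘ _root_.betaMeasure (a + b) c = _root_.betaMeasure a (b + c) := by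
  have := isProbabilityMeasure_betaMeasure ha hb
  have := isProbabilityMeasure_betaMeasure (add_pos ha hb) hc
  have := isProbabilityMeasure_betaMeasure ha (add_pos hb hc)
  have hprop : _root_.betaMeasure a b ∗ₘ _root_.betaMeasure (a + b) c =
      (ENNReal.ofReal (beta a b)⁻¹ * ENNReal.ofReal (beta (a + b) c)⁻¹ *
        ∫⁻ t, unnormalizedBetaPDF b c t) •
        volume.withDensity (unnormalizedBetaPDF a (b + c)) := by
    rw [betaMeasure_eq_smul_withDensity, betaMeasure_eq_smul_withDensity, Measure.mconv_smul_left,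
      Measure.mconv_smul_right, Real.mconv_withDensity (by fun_prop) (by fun_prop)]
    simp_rw [lintegral_unnormalizedBetaPDF_div_mul]
    rw [smul_smul, mul_smul _ (∫⁻ t, unnormalizedBetaPDF b c t),
      ← withDensity_smul _ (measurable_unnormalizedBetaPDF a (b + c))]
    rfl
  exact Measure.eq_of_eq_smul_of_eq_smul hprop (betaMeasure_eq_smul_withDensity a (b + c))

theorem HasBetaDist.mul {Ω : Type*} [MeasurableSpace Ω] {P : Measure Ω} [IsFiniteMeasure P]
    {Y Z : Ω → ℝ} {a b c : ℝ} (ha : 0 < a) (hb : 0 < b) (hc : 0 < c)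
    (hY : HasBetaDist P Y a b) (hZ : HasBetaDist P Z (a + b) c) (hYZ : IndepFun Y Z P) :
    HasBetaDist P (Y * Z) a (b + c) :=
  ⟨hY.1.mul hZ.1, by
    rw [hYZ.map_mul_eq_map_mconv_map hY.1 hZ.1, hY.2, hZ.2,
      betaMeasure_mconv_betaMeasure ha hb hc]⟩

theorem HasBetaDist.prod_fin {Ω : Type*} [MeasurableSpace Ω] {P : Measure Ω}
    [IsFiniteMeasure P] {n : ℕ} {a b : Fin (n + 1) → ℝ} {X : Fin (n + 1) → Ω → ℝ}
    (ha : ∀ i, 0 < a i) (hb : ∀ i, 0 < b i)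
    (htel : ∀ i : Fin n, a i.succ = a i.castSucc + b i.castSucc)
    (hindep : iIndepFun X P) (hX : ∀ i, HasBetaDist P (X i) (a i) (b i)) :
    HasBetaDist P (∏ i, X i) (a 0) (∑ i, b i) := by
  induction n with
  | zero => simpa using hX 0
  | succ n ih =>
    have htail : HasBetaDist P (∏ i : Fin (n + 1), X i.succ) (a 0 + b 0)
        (∑ i : Fin (n + 1), b i.succ) := by
      rw [show a 0 + b 0 = a (Fin.succ 0) by simpa using (htel 0).symm]
      exact ih (a := fun i => a i.succ) (b := fun i => b i.succ) (X := fun i => X i.succ)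
        (fun i => ha i.succ) (fun i => hb i.succ)
        (fun i => by simpa only [Fin.succ_castSucc] using htel i.succ)
        (hindep.precomp (Fin.succ_injective _)) (fun i => hX i.succ)
    have hindep_head : IndepFun (X 0) (∏ i : Fin (n + 1), X i.succ) P := by
      have := hindep.indepFun_finsetProd_of_notMem (fun i => (hX i).1)
        (s := Finset.univ.map (Fin.succEmb _)) (i := 0) (by simp)
      rw [Finset.prod_map] at this
      exact this.symm
    rw [Fin.prod_univ_succ, Fin.sum_univ_succ]
    exact HasBetaDist.mul (ha 0) (hb 0)
      (Finset.sum_pos (fun i _ => hb i.succ) Finset.univ_nonempty) (hX 0) htail hindep_head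

theorem stmt0 (n : ℕ) (hn : 1 ≤ n)
    {Ω : Type*} [MeasurableSpace Ω] (P : Measure Ω) [IsProbabilityMeasure P]
    (a b : Fin n → ℝ) (ha : ∀ i, 0 < a i) (hb : ∀ i, 0 < b i)
    (htel : ∀ i : Fin n, ∀ h : i.val + 1 < n, a ⟨i.val + 1, h⟩ = a i + b i)
    (X : Fin n → Ω → ℝ)
    (hindep : iIndepFun X P)
    (hX : ∀ i, HasBetaDist P (X i) (a i) (b i)) :
    HasBetaDist P (fun ω => ∏ i, X i ω) (a ⟨0, hn⟩) (∑ i, b i) := by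
  obtain ⟨m, rfl⟩ : ∃ m, n = m + 1 := ⟨n - 1, by omega⟩
  have := HasBetaDist.prod_fin ha hb (fun i => htel i.castSucc (by simp)) hindep hX
  simpa only [Finset.prod_fn, Fin.zero_eta] using this
end

section
/- Fix an integer d ≥ 2. Let (X_{j,i})_{0 ≤ j ≤ d−2, j ≤ i ≤ d−2} be independent random variables with X_{j,i} having the Beta(1 + i/2, 1/2) distribution, and let Y_1,…,Y_{d−1} be independent random variables with Y_j having the Beta((j+1)/2, (d−j)/2) distribution. Then the double product ∏_{j=0}^{d−2} ∏_{i=j}^{d−2} X_{j,i} has the same distribution as the single product ∏_{j=1}^{d−1} Y_j. (Consequently, the determinant of a correlation matrix sampled uniformly from the space of d × d positive definite correlation matrices can be written as a product of d−1 independent Beta distributed random variables.) -/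
open MeasureTheory ProbabilityTheory Real Filter Finset

open Polynomial

/-!
Both products take values in `[0, 1]`, where a finite measure is determined by its moments
(Weierstrass approximation). By independence the `n`-th moment of a product is the product of
the moments, and the `n`-th moment of `Beta(a, b)` is the ratio of rising factorials
`(a)ₙ / (a + b)ₙ`. The parameters `a = 1 + i/2` and `a + b = 1 + (i+1)/2` of consecutive factors
`X j i`, `X j (i+1)` overlap, so for fixed `j` the product over `i` telescopes to
`(1 + j/2)ₙ / (1 + (d-1)/2)ₙ`, the `n`-th moment of `Y (j+1)`.
-/

lemma Real.Gamma_add_nat_eq_ascPochhammer_mul {x : ℝ} (hx : 0 < x) (n : ℕ) :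
    Real.Gamma (x + n) = (ascPochhammer ℝ n).eval x * Real.Gamma x := by
  induction n with
  | zero => simp
  | succ n ih =>
    rw [Nat.cast_succ, ← add_assoc, Real.Gamma_add_one (by positivity), ih,
      ascPochhammer_succ_eval]
    ring

namespace ProbabilityTheory

lemma measurable_betaPDF (a b : ℝ) : Measurable (betaPDF a b) :=
  (measurable_betaPDFReal a b).ennreal_ofReal

lemma betaPDFReal_nonneg {a b : ℝ} (ha : 0 < a) (hb : 0 < b) (x : ℝ) :
    0 ≤ betaPDFReal a b x := by
  by_cases hx : 0 < x ∧ x < 1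
  · exact (betaPDFReal_pos hx.1 hx.2 ha hb).le
  · simp [betaPDFReal, hx]

lemma toReal_betaPDF {a b : ℝ} (ha : 0 < a) (hb : 0 < b) (x : ℝ) :
    (betaPDF a b x).toReal = betaPDFReal a b x :=
  ENNReal.toReal_ofReal (betaPDFReal_nonneg ha hb x)

lemma ae_mem_Ioo_betaMeasure (a b : ℝ) : ∀ᵐ x ∂betaMeasure a b, x ∈ Set.Ioo 0 1 := by
  rw [betaMeasure, ae_withDensity_iff (measurable_betaPDF a b)]
  refine ae_of_all _ fun x hx => ?_
  by_contra h
  simp [betaPDF_eq, Set.mem_Ioo.not.mp h] at hx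

lemma integral_betaPDFReal {a b : ℝ} (ha : 0 < a) (hb : 0 < b) :
    ∫ x, betaPDFReal a b x = 1 := by
  simp_rw [← toReal_betaPDF ha hb]
  rw [integral_toReal (measurable_betaPDF a b).aemeasurable
    (ae_of_all _ fun _ => ENNReal.ofReal_lt_top), lintegral_betaPDF_eq_one ha hb,
    ENNReal.toReal_one]

lemma betaPDFReal_mul_pow {a b : ℝ} (ha : 0 < a) (hb : 0 < b) (n : ℕ) (x : ℝ) :
    betaPDFReal a b x * x ^ n = beta (a + n) b / beta a b * betaPDFReal (a + n) b x := by
  rw [betaPDFReal, betaPDFReal]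
  split_ifs with hx
  · have := beta_pos ha hb
    have := beta_pos (by positivity : 0 < a + n) hb
    rw [add_sub_right_comm, Real.rpow_add hx.1, Real.rpow_natCast]
    field_simp
  · simp

lemma integral_pow_betaMeasure {a b : ℝ} (ha : 0 < a) (hb : 0 < b) (n : ℕ) :
    ∫ x, x ^ n ∂betaMeasure a b = beta (a + n) b / beta a b := by
  rw [betaMeasure, integral_withDensity_eq_integral_toReal_smul (measurable_betaPDF a b)
    (ae_of_all _ fun _ => ENNReal.ofReal_lt_top)]
  simp_rw [toReal_betaPDF ha hb, smul_eq_mul, betaPDFReal_mul_pow ha hb]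
  rw [integral_const_mul, integral_betaPDFReal (by positivity) hb, mul_one]

lemma beta_add_nat_div_beta {a b : ℝ} (ha : 0 < a) (hb : 0 < b) (n : ℕ) :
    beta (a + n) b / beta a b
      = (ascPochhammer ℝ n).eval a / (ascPochhammer ℝ n).eval (a + b) := by
  have hΓa := (Real.Gamma_pos_of_pos ha).ne'
  have hΓb := (Real.Gamma_pos_of_pos hb).ne'
  have hΓab := (Real.Gamma_pos_of_pos (add_pos ha hb)).ne'
  have hPab := (ascPochhammer_pos n _ (add_pos ha hb)).ne'
  rw [beta, beta, add_right_comm, Real.Gamma_add_nat_eq_ascPochhammer_mul ha,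
    Real.Gamma_add_nat_eq_ascPochhammer_mul (add_pos ha hb)]
  field_simp

end ProbabilityTheory

lemma Continuous.integrable_of_ae_mem_compact {X E : Type*} [TopologicalSpace X]
    [T2Space X] [MeasurableSpace X] [OpensMeasurableSpace X] [NormedAddCommGroup E] {f : X → E}
    (hf : Continuous f) {K : Set X} (hK : IsCompact K) {μ : Measure X}
    [IsFiniteMeasureOnCompacts μ] (hμ : ∀ᵐ x ∂μ, x ∈ K) : Integrable f μ := by
  rw [← Measure.restrict_eq_self_of_ae_mem hμ]
  exact hf.continuousOn.integrableOn_compact hK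

lemma integral_eval_eq_sum_coeff_mul_integral_pow {μ : Measure ℝ} (p : ℝ[X])
    (hμ : ∀ k : ℕ, Integrable (fun x => x ^ k) μ) :
    ∫ x, p.eval x ∂μ = ∑ k ∈ range (p.natDegree + 1), p.coeff k * ∫ x, x ^ k ∂μ := by
  simp_rw [eval_eq_sum_range]
  rw [integral_finsetSum _ fun k _ => (hμ k).const_mul _]
  simp_rw [integral_const_mul]

theorem MeasureTheory.Measure.ext_of_integral_pow_eq_of_ae_mem_Icc {μ ν : Measure ℝ}
    [IsFiniteMeasure μ] [IsFiniteMeasure ν] {a b : ℝ}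
    (hμ : ∀ᵐ x ∂μ, x ∈ Set.Icc a b) (hν : ∀ᵐ x ∂ν, x ∈ Set.Icc a b)
    (h : ∀ n : ℕ, ∫ x, x ^ n ∂μ = ∫ x, x ^ n ∂ν) : μ = ν := by
  have hpoly (p : ℝ[X]) : ∫ x, p.eval x ∂μ = ∫ x, p.eval x ∂ν := by
    rw [integral_eval_eq_sum_coeff_mul_integral_pow p
        fun k => (continuous_pow k).integrable_of_ae_mem_compact isCompact_Icc hμ,
      integral_eval_eq_sum_coeff_mul_integral_pow p
        fun k => (continuous_pow k).integrable_of_ae_mem_compact isCompact_Icc hν]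
    simp_rw [h]
  have happrox {κ : Measure ℝ} [IsFiniteMeasure κ] (hκ : ∀ᵐ x ∂κ, x ∈ Set.Icc a b)
      {f g : ℝ → ℝ} (hf : Continuous f) (hg : Continuous g) {δ : ℝ}
      (hfg : ∀ x ∈ Set.Icc a b, |f x - g x| ≤ δ) :
      dist (∫ x, f x ∂κ) (∫ x, g x ∂κ) ≤ δ * κ.real Set.univ := by
    rw [dist_eq_norm, ← integral_sub (hf.integrable_of_ae_mem_compact isCompact_Icc hκ)
      (hg.integrable_of_ae_mem_compact isCompact_Icc hκ)]
    refine norm_integral_le_of_norm_le_const ?_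
    filter_upwards [hκ] with x hx using hfg x hx
  refine ext_of_forall_integral_eq_of_IsFiniteMeasure fun f => ?_
  set C := μ.real Set.univ + ν.real Set.univ + 1
  have hC : 0 < C := by positivity
  refine eq_of_forall_dist_le fun ε hε => ?_
  obtain ⟨p, hp⟩ := exists_polynomial_near_of_continuousOn a b f f.continuous.continuousOn
    (ε / C) (by positivity)
  calc dist (∫ x, f x ∂μ) (∫ x, f x ∂ν)
      ≤ dist (∫ x, f x ∂μ) (∫ x, p.eval x ∂μ)
        + dist (∫ x, p.eval x ∂ν) (∫ x, f x ∂ν) := by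
        rw [← hpoly]; exact dist_triangle _ _ _
    _ ≤ ε / C * μ.real Set.univ + ε / C * ν.real Set.univ := by
        gcongr
        · exact happrox hμ f.continuous p.continuous fun x hx => by
            rw [abs_sub_comm]; exact (hp x hx).le
        · exact happrox hν p.continuous f.continuous fun x hx => (hp x hx).le
    _ ≤ ε := by
        rw [← mul_add, div_mul_eq_mul_div, div_le_iff₀ hC]
        gcongr
        linarith

noncomputable def betaMoment (a b : ℝ) (n : ℕ) : ℝ :=
  (ascPochhammer ℝ n).eval a / (ascPochhammer ℝ n).eval (a + b)

namespace HasBetaDist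

variable {Ω : Type*} [MeasurableSpace Ω] {P : Measure Ω} {X : Ω → ℝ} {a b : ℝ}

lemma map_eq_betaMeasure (hX : HasBetaDist P X a b) :
    P.map X = ProbabilityTheory.betaMeasure a b := by
  rw [hX.2, _root_.betaMeasure, ProbabilityTheory.betaMeasure]
  congr with x
  simp only [betaPDF_eq, Set.mem_Ioo, beta]
  split_ifs <;> ring_nf

lemma ae_mem_Icc (hX : HasBetaDist P X a b) : ∀ᵐ ω ∂P, X ω ∈ Set.Icc 0 1 := by
  refine ae_of_ae_map hX.1.aemeasurable ?_
  rw [hX.map_eq_betaMeasure]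
  filter_upwards [ae_mem_Ioo_betaMeasure a b] with x hx using Set.Ioo_subset_Icc_self hx

lemma integral_pow (hX : HasBetaDist P X a b) (ha : 0 < a) (hb : 0 < b) (n : ℕ) :
    ∫ ω, X ω ^ n ∂P = betaMoment a b n := by
  rw [← integral_map (f := fun x => x ^ n) hX.1.aemeasurable (by fun_prop),
    hX.map_eq_betaMeasure, integral_pow_betaMeasure ha hb, beta_add_nat_div_beta ha hb, betaMoment]

end HasBetaDist

section IndependentBetaProducts

variable {Ω ι κ : Type*} [MeasurableSpace Ω] {P : Measure Ω} [Fintype ι] [Fintype κ]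
  {X : ι → Ω → ℝ} {Y : κ → Ω → ℝ} {a b : ι → ℝ} {c e : κ → ℝ}

lemma ae_prod_mem_Icc_of_hasBetaDist (hX : ∀ i, HasBetaDist P (X i) (a i) (b i)) :
    ∀ᵐ ω ∂P, ∏ i, X i ω ∈ Set.Icc 0 1 := by
  filter_upwards [ae_all_iff.2 fun i => (hX i).ae_mem_Icc] with ω hω
  exact ⟨prod_nonneg fun i _ => (hω i).1,
    prod_le_one (fun i _ => (hω i).1) fun i _ => (hω i).2⟩

lemma integral_prod_pow_of_hasBetaDist (hind : iIndepFun X P)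
    (hX : ∀ i, HasBetaDist P (X i) (a i) (b i)) (ha : ∀ i, 0 < a i) (hb : ∀ i, 0 < b i)
    (n : ℕ) : ∫ ω, (∏ i, X i ω) ^ n ∂P = ∏ i, betaMoment (a i) (b i) n := by
  simp_rw [← prod_pow]
  rw [hind.integral_fun_prod_comp (f := fun _ x => x ^ n) (fun i => (hX i).1.aemeasurable)
    fun _ => by fun_prop]
  exact prod_congr rfl fun i _ => (hX i).integral_pow (ha i) (hb i) n

theorem map_prod_eq_of_hasBetaDist [IsProbabilityMeasure P]
    (hXind : iIndepFun X P) (hYind : iIndepFun Y P)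
    (hX : ∀ i, HasBetaDist P (X i) (a i) (b i)) (hY : ∀ k, HasBetaDist P (Y k) (c k) (e k))
    (ha : ∀ i, 0 < a i) (hb : ∀ i, 0 < b i) (hc : ∀ k, 0 < c k) (he : ∀ k, 0 < e k)
    (hmom : ∀ n, ∏ i, betaMoment (a i) (b i) n = ∏ k, betaMoment (c k) (e k) n) :
    P.map (fun ω => ∏ i, X i ω) = P.map (fun ω => ∏ k, Y k ω) := by
  have hXm : Measurable fun ω => ∏ i, X i ω := Finset.measurable_prod _ fun i _ => (hX i).1
  have hYm : Measurable fun ω => ∏ k, Y k ω := Finset.measurable_prod _ fun k _ => (hY k).1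
  refine Measure.ext_of_integral_pow_eq_of_ae_mem_Icc (a := 0) (b := 1)
    ((ae_map_iff hXm.aemeasurable measurableSet_Icc).2 (ae_prod_mem_Icc_of_hasBetaDist hX))
    ((ae_map_iff hYm.aemeasurable measurableSet_Icc).2 (ae_prod_mem_Icc_of_hasBetaDist hY))
    fun n => ?_
  rw [integral_map hXm.aemeasurable (by fun_prop), integral_map hYm.aemeasurable (by fun_prop),
    integral_prod_pow_of_hasBetaDist hXind hX ha hb,
    integral_prod_pow_of_hasBetaDist hYind hY hc he, hmom]

end IndependentBetaProducts

theorem Finset.prod_Icc_div₀ {G₀ : Type*} [CommGroupWithZero G₀] {f : ℕ → G₀}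
    (hf : ∀ i, f i ≠ 0) {m n : ℕ} (hmn : m ≤ n) :
    ∏ i ∈ Icc m n, f (i + 1) / f i = f (n + 1) / f m := by
  simpa using congrArg Units.val (prod_Icc_div hmn fun i => Units.mk0 (f i) (hf i))

lemma prod_Icc_betaMoment_half {j m : ℕ} (hjm : j ≤ m) (n : ℕ) :
    ∏ i ∈ Icc j m, betaMoment (1 + i / 2) (1 / 2) n
      = betaMoment (1 + j / 2) ((m + 1 - j) / 2) n := by
  set g : ℕ → ℝ := fun i => ((ascPochhammer ℝ n).eval (1 + i / 2))⁻¹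
  have hg : ∀ i, g i ≠ 0 := fun i => inv_ne_zero (ascPochhammer_pos n _ (by positivity)).ne'
  calc ∏ i ∈ Icc j m, betaMoment (1 + i / 2) (1 / 2) n
    _ = ∏ i ∈ Icc j m, g (i + 1) / g i := by
        refine prod_congr rfl fun i _ => ?_
        simp only [g, betaMoment, inv_div_inv]
        push_cast
        ring_nf
    _ = g (m + 1) / g j := prod_Icc_div₀ hg hjm
    _ = betaMoment (1 + j / 2) ((m + 1 - j) / 2) n := by
        simp only [g, betaMoment, inv_div_inv]
        push_cast
        ring_nf

lemma prod_prod_betaMoment_eq {d : ℕ} (hd : 2 ≤ d) (n : ℕ) :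
    ∏ j ∈ range (d - 1), ∏ i ∈ Icc j (d - 2), betaMoment (1 + i / 2) (1 / 2) n
      = ∏ j ∈ Icc 1 (d - 1), betaMoment ((j + 1) / 2) ((d - j) / 2) n := by
  rw [← Ico_add_one_right_eq_Icc, ← prod_Ico_add' _ 0 (d - 1) 1, ← range_eq_Ico]
  refine prod_congr rfl fun j hj => ?_
  rw [prod_Icc_betaMoment_half (by grind) n]
  have hd2 : ((d - 2 : ℕ) : ℝ) = d - 2 := by rw [Nat.cast_sub hd]; norm_num
  rw [hd2]
  push_cast
  ring_nf

theorem stmt1 (d : ℕ) (hd : 2 ≤ d)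
    {Ω : Type*} [MeasurableSpace Ω] (P : Measure Ω) [IsProbabilityMeasure P]
    (X : ℕ → ℕ → Ω → ℝ) (Y : ℕ → Ω → ℝ)
    (hXindep : iIndepFun
      (fun p : {p : ℕ × ℕ // p.1 ≤ d - 2 ∧ p.1 ≤ p.2 ∧ p.2 ≤ d - 2} => X p.1.1 p.1.2) P)
    (hX : ∀ j i : ℕ, j ≤ d - 2 → j ≤ i → i ≤ d - 2 →
      HasBetaDist P (X j i) (1 + (i : ℝ) / 2) (1 / 2))
    (hYindep : iIndepFun
      (fun j : {j : ℕ // 1 ≤ j ∧ j ≤ d - 1} => Y j) P)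
    (hY : ∀ j : ℕ, 1 ≤ j → j ≤ d - 1 →
      HasBetaDist P (Y j) (((j : ℝ) + 1) / 2) (((d : ℝ) - (j : ℝ)) / 2)) :
    Measure.map (fun ω => ∏ j ∈ Finset.range (d - 1), ∏ i ∈ Finset.Icc j (d - 2), X j i ω) P
      = Measure.map (fun ω => ∏ j ∈ Finset.Icc 1 (d - 1), Y j ω) P := by
  set r := (range (d - 1) ×ˢ range (d - 1)).filter fun p => p.1 ≤ p.2
  have hr : ∀ p : ℕ × ℕ, p ∈ r ↔ p.1 ∈ range (d - 1) ∧ p.2 ∈ Icc p.1 (d - 2) := by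
    simp only [r, mem_filter, mem_product, mem_range, mem_Icc]; omega
  have hrX : ∀ p : ℕ × ℕ, p ∈ r ↔ p.1 ≤ d - 2 ∧ p.1 ≤ p.2 ∧ p.2 ≤ d - 2 := by
    simp only [r, mem_filter, mem_product, mem_range]; omega
  have hrY : ∀ j, j ∈ Icc 1 (d - 1) ↔ 1 ≤ j ∧ j ≤ d - 1 := fun j => mem_Icc
  let _ := Fintype.subtype r hrX
  let _ := Fintype.subtype _ hrY
  have hXprod (f : ℕ → ℕ → ℝ) : ∏ j ∈ range (d - 1), ∏ i ∈ Icc j (d - 2), f j i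
      = ∏ q : {p : ℕ × ℕ // p.1 ≤ d - 2 ∧ p.1 ≤ p.2 ∧ p.2 ≤ d - 2},
          f q.1.1 q.1.2 := by
    rw [← prod_finset_product' r _ _ hr, prod_subtype r hrX]
  have hYprod (f : ℕ → ℝ) :
      ∏ j ∈ Icc 1 (d - 1), f j = ∏ q : {j : ℕ // 1 ≤ j ∧ j ≤ d - 1}, f q :=
    prod_subtype _ hrY f
  simp_rw [hXprod, hYprod]
  refine map_prod_eq_of_hasBetaDist hXindep hYindep (fun q => hX _ _ q.2.1 q.2.2.1 q.2.2.2)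
    (fun q => hY _ q.2.1 q.2.2) (fun _ => by positivity) (fun _ => by positivity)
    (fun _ => by positivity)
    (fun q => half_pos (sub_pos.2 (by exact_mod_cast (show (q : ℕ) < d by grind)))) fun n => ?_
  rw [← hXprod (fun _ i => betaMoment (1 + i / 2) (1 / 2) n),
    ← hYprod (fun j => betaMoment ((j + 1) / 2) ((d - j) / 2) n)]
  exact prod_prod_betaMoment_eq hd n
end

section
/- Fix a real η > 1 and an integer d ≥ 2. Let (X_{j,i})_{0 ≤ j ≤ d−2, j ≤ i ≤ d−2} be independent random variables with X_{j,i} having the Beta(η + i/2, 1/2) distribution, and let Y_1,…,Y_{d−1} be independent random variables with Y_j having the Beta(η + (j−1)/2, (d−j)/2) distribution. Then the double product ∏_{j=0}^{d−2} ∏_{i=j}^{d−2} X_{j,i} has the same distribution as the single product ∏_{j=1}^{d−1} Y_j. -/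
/-!
For independent `U ~ Beta(a, b)` and `V ~ Beta(a + b, c)` the product `U V` is `Beta(a, b + c)`:
its density is the multiplicative convolution `t ↦ ∫ f_U(x) f_V(t / x) / x dx`, and the
substitution `x = t / (t + (1 - t) v)` turns this integral into the Beta integral `B(b, c)`.
Along row `j` of the array this telescopes: `∏_{i ≥ j} X_{j,i}` is
`Beta(η + j/2, (d - 1 - j)/2)`, which is the law of `Y_{j+1}`. The rows are independent, so
the two products of `d - 1` independent factors with matching laws have the same law.
-/

open MeasureTheory ProbabilityTheory Real Filter Finset

open scoped ENNReal

lemma HasBetaDist.hasLaw {Ω : Type*} [MeasurableSpace Ω] {P : Measure Ω} {X : Ω → ℝ} {a b : ℝ}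
    (h : HasBetaDist P X a b) : HasLaw X (ProbabilityTheory.betaMeasure a b) P := by
  refine ⟨h.1.aemeasurable, h.2.trans (congrArg volume.withDensity (funext fun x => ?_))⟩
  rw [betaPDF_eq, beta]
  congr 1
  simp only [Set.mem_Ioo]
  split_ifs <;> ring

namespace MeasureTheory

lemma lintegral_mul_comp_mul_left {g φ : ℝ → ℝ≥0∞} (hg : Measurable g) (hφ : Measurable φ)
    {x : ℝ} (hx : x ≠ 0) :
    ∫⁻ y, g y * φ (x * y) = ENNReal.ofReal |x⁻¹| * ∫⁻ t, g (t / x) * φ t := by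
  calc ∫⁻ y, g y * φ (x * y) = ∫⁻ y, (fun t => g (t / x) * φ t) (x * y) := by
        simp only [mul_div_cancel_left₀ _ hx]
    _ = ∫⁻ t, g (t / x) * φ t ∂(volume.map (x * ·)) :=
        (lintegral_map ((hg.comp (measurable_id.div_const x)).mul hφ) (measurable_const_mul x)).symm
    _ = ENNReal.ofReal |x⁻¹| * ∫⁻ t, g (t / x) * φ t := by
        rw [Real.map_volume_mul_left hx, lintegral_smul_measure, smul_eq_mul]

theorem withDensity_mconv_withDensity {f g : ℝ → ℝ≥0∞} (hf : Measurable f) (hg : Measurable g) :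
    volume.withDensity f ∗ₘ volume.withDensity g =
      volume.withDensity fun t => ∫⁻ x, f x * g (t / x) * ENNReal.ofReal |x⁻¹| := by
  refine Measure.ext_of_lintegral _ fun φ hφ => ?_
  have hinner : ∀ᵐ x, f x * ∫⁻ y, φ (x * y) ∂volume.withDensity g
      = ∫⁻ t, f x * g (t / x) * ENNReal.ofReal |x⁻¹| * φ t := by
    filter_upwards [Measure.ae_ne volume 0] with x hx
    rw [lintegral_withDensity_eq_lintegral_mul _ hg (by fun_prop : Measurable fun y => φ (x * y))]
    simp only [Pi.mul_apply]
    rw [lintegral_mul_comp_mul_left hg hφ hx, ← lintegral_const_mul' _ _ ENNReal.ofReal_ne_top,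
      ← lintegral_const_mul _ (by fun_prop)]
    congr 1; funext t; ring
  rw [Measure.lintegral_mconv hφ, lintegral_withDensity_eq_lintegral_mul _ hf
      (Measurable.lintegral_prod_right' (f := fun p : ℝ × ℝ => φ (p.1 * p.2)) (by fun_prop)),
    lintegral_withDensity_eq_lintegral_mul _ (by fun_prop) hφ]
  simp only [Pi.mul_apply]
  rw [lintegral_congr_ae hinner, lintegral_lintegral_swap (by fun_prop)]
  congr 1; funext t
  rw [lintegral_mul_const _ (by fun_prop)]

end MeasureTheory

namespace ProbabilityTheory

lemma beta_mul_beta_add {a b c : ℝ} (ha : 0 < a) (hb : 0 < b) (hc : 0 < c) :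
    beta a b * beta (a + b) c = beta a (b + c) * beta b c := by
  have hab := (Gamma_pos_of_pos (add_pos ha hb)).ne'
  have hbc := (Gamma_pos_of_pos (add_pos hb hc)).ne'
  simp only [beta, add_assoc]
  field_simp

lemma lintegral_Ioo_rpow_mul_rpow {b c : ℝ} (hb : 0 < b) (hc : 0 < c) :
    ∫⁻ v in Set.Ioo 0 1, ENNReal.ofReal (v ^ (b - 1) * (1 - v) ^ (c - 1)) =
      ENNReal.ofReal (beta b c) := by
  have hB := beta_pos hb hc
  have h := lintegral_betaPDF_eq_one hb hc
  simp_rw [lintegral_betaPDF, mul_assoc, ENNReal.ofReal_mul (one_div_pos.2 hB).le] at h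
  rw [lintegral_const_mul' _ _ ENNReal.ofReal_ne_top] at h
  rw [mul_comm] at h
  rw [ENNReal.eq_inv_of_mul_eq_one_left h, ← ENNReal.ofReal_inv_of_pos (by positivity), one_div,
    inv_inv]

lemma moebius_jacobian_mul_rpow {b c t v : ℝ} (ht0 : 0 < t) (ht1 : t < 1) (hv0 : 0 < v)
    (hv1 : v < 1) (D : ℝ) (hD : D = t + (1 - t) * v) :
    t * (1 - t) / D ^ 2 *
      (((1 - t) * v / D) ^ (b - 1) * (t * (1 - t) * (1 - v) / D) ^ (c - 1) * (t / D) ^ (-(b + c)))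
    = t ^ (-b) * (1 - t) ^ (b + c - 1) * (v ^ (b - 1) * (1 - v) ^ (c - 1)) := by
  have h1t : 0 < 1 - t := by linarith
  have h1v : 0 < 1 - v := by linarith
  have hD : 0 < D := hD ▸ by positivity
  have hsq : t * (1 - t) / D ^ 2 = t ^ (1:ℝ) * (1 - t) ^ (1:ℝ) * D ^ (-2:ℝ) := by
    rw [rpow_one, rpow_one, rpow_neg hD.le, div_eq_mul_inv]; norm_cast
  rw [hsq, div_rpow (by positivity) hD.le, div_rpow (by positivity) hD.le, div_rpow ht0.le hD.le,
    mul_rpow h1t.le hv0.le, mul_rpow (by positivity) h1v.le, mul_rpow ht0.le h1t.le]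
  simp only [rpow_def_of_pos, ht0, h1t, hD, hv0, h1v, div_eq_mul_inv, ← exp_neg, ← exp_add]
  congr 1; ring

/-- The substitution `x = t / (t + (1 - t) v)` maps `(0, 1)` onto `(t, 1)` and turns this integral
into the Beta integral `B(b, c)`. -/
lemma lintegral_Ioo_rpow_mul_rpow_mul_rpow {b c t : ℝ} (hb : 0 < b) (hc : 0 < c) (ht0 : 0 < t)
    (ht1 : t < 1) :
    ∫⁻ x in Set.Ioo t 1, ENNReal.ofReal ((1 - x) ^ (b - 1) * (x - t) ^ (c - 1) * x ^ (-(b + c))) =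
      ENNReal.ofReal (t ^ (-b) * (1 - t) ^ (b + c - 1) * beta b c) := by
  have h1t : 0 < 1 - t := by linarith
  set φ : ℝ → ℝ := fun v => t / (t + (1 - t) * v)
  have hD : ∀ v ∈ Set.Ioo (0:ℝ) 1, 0 < t + (1 - t) * v := fun v hv => by
    have := hv.1; positivity
  have himage : φ '' Set.Ioo 0 1 = Set.Ioo t 1 := by
    ext x
    constructor
    · rintro ⟨v, hv, rfl⟩
      have hD1 : t + (1 - t) * v < 1 := by nlinarith [hv.2]
      constructor
      · rw [lt_div_iff₀ (hD v hv)]; nlinarith [mul_lt_mul_of_pos_left hD1 ht0]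
      · rw [div_lt_one (hD v hv)]; nlinarith [hv.1]
    · intro hx
      have hx0 : 0 < x := ht0.trans hx.1
      have h1x : 0 < 1 - x := by linarith [hx.2]
      refine ⟨t * (1 - x) / (x * (1 - t)), ⟨by positivity, ?_⟩, ?_⟩
      · rw [div_lt_one (by positivity)]; nlinarith [hx.1]
      · simp only [φ]
        field_simp
        ring
  have hinj : Set.InjOn φ (Set.Ioo 0 1) := by
    intro u hu v hv huv
    simp only [φ, div_eq_div_iff (hD u hu).ne' (hD v hv).ne'] at huv
    exact (mul_left_cancel₀ h1t.ne' (add_left_cancel (mul_left_cancel₀ ht0.ne' huv))).symm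
  have hderiv : ∀ v ∈ Set.Ioo (0:ℝ) 1,
      HasDerivWithinAt φ (-(t * (1 - t)) / (t + (1 - t) * v) ^ 2) (Set.Ioo 0 1) v := by
    intro v hv
    have h : HasDerivAt φ ((0 * (t + (1 - t) * v) - t * ((1 - t) * 1)) / (t + (1 - t) * v) ^ 2) v :=
      (hasDerivAt_const v t).div (((hasDerivAt_id' v).const_mul (1 - t)).const_add t) (hD v hv).ne'
    exact (h.congr_deriv (by ring)).hasDerivWithinAt
  have hintegrand : ∀ v ∈ Set.Ioo (0:ℝ) 1,
      ENNReal.ofReal |-(t * (1 - t)) / (t + (1 - t) * v) ^ 2| *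
          ENNReal.ofReal ((1 - φ v) ^ (b - 1) * (φ v - t) ^ (c - 1) * φ v ^ (-(b + c))) =
        ENNReal.ofReal (t ^ (-b) * (1 - t) ^ (b + c - 1)) *
          ENNReal.ofReal (v ^ (b - 1) * (1 - v) ^ (c - 1)) := by
    intro v hv
    have hDv := hD v hv
    have e1 : 1 - φ v = (1 - t) * v / (t + (1 - t) * v) := by
      simp only [φ]; field_simp; ring
    have e2 : φ v - t = t * (1 - t) * (1 - v) / (t + (1 - t) * v) := by
      simp only [φ]; field_simp; ring
    rw [← ENNReal.ofReal_mul (abs_nonneg _), ← ENNReal.ofReal_mul (by positivity), e1, e2,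
      abs_div, abs_neg, abs_of_pos (by positivity), abs_of_pos (by positivity),
      moebius_jacobian_mul_rpow ht0 ht1 hv.1 hv.2 _ rfl]
  rw [← himage, lintegral_image_eq_lintegral_abs_deriv_mul measurableSet_Ioo hderiv hinj,
    setLIntegral_congr_fun measurableSet_Ioo hintegrand,
    lintegral_const_mul' _ _ ENNReal.ofReal_ne_top, lintegral_Ioo_rpow_mul_rpow hb hc,
    ← ENNReal.ofReal_mul (by positivity)]

lemma betaPDF_mul_betaPDF_div_eq_zero {a b a' c x t : ℝ} (h : ¬(0 < t ∧ t < x ∧ x < 1)) :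
    betaPDF a b x * betaPDF a' c (t / x) = 0 := by
  rcases le_or_gt x 0 with hx0 | hx0
  · rw [betaPDF_eq_zero_of_nonpos hx0, zero_mul]
  rcases le_or_gt 1 x with hx1 | hx1
  · rw [betaPDF_eq_zero_of_one_le hx1, zero_mul]
  rcases le_or_gt t 0 with ht | ht
  · rw [betaPDF_eq_zero_of_nonpos (div_nonpos_of_nonpos_of_nonneg ht hx0.le), mul_zero]
  · have hxt : x ≤ t := by by_contra hxt; exact h ⟨ht, not_le.1 hxt, hx1⟩
    rw [betaPDF_eq_zero_of_one_le ((one_le_div hx0).2 hxt), mul_zero]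

lemma betaPDF_mul_betaPDF_div_mul_abs_inv_of_lt {a b c x t : ℝ} (ha : 0 < a) (hb : 0 < b)
    (hc : 0 < c) (ht : 0 < t) (htx : t < x) (hx : x < 1) :
    betaPDF a b x * betaPDF (a + b) c (t / x) * ENNReal.ofReal |x⁻¹| =
      ENNReal.ofReal (t ^ (a + b - 1) / (beta a b * beta (a + b) c)) *
        ENNReal.ofReal ((1 - x) ^ (b - 1) * (x - t) ^ (c - 1) * x ^ (-(b + c))) := by
  have hx0 : 0 < x := ht.trans htx
  have hxt : 0 < x - t := by linarith
  have h1x : 0 < 1 - x := by linarith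
  have hB₁ := beta_pos ha hb
  have hB₂ := beta_pos (add_pos ha hb) hc
  have hpow : x ^ (a - 1) * (t / x) ^ (a + b - 1) * ((x - t) / x) ^ (c - 1) * x⁻¹ =
      t ^ (a + b - 1) * ((x - t) ^ (c - 1) * x ^ (-(b + c))) := by
    rw [div_rpow ht.le hx0.le, div_rpow hxt.le hx0.le, ← rpow_neg_one x]
    simp only [rpow_def_of_pos, ht, hx0, hxt, div_eq_mul_inv, ← exp_neg, ← exp_add]
    congr 1; ring
  have h1tx : 0 < 1 - t / x := by rw [sub_pos, div_lt_one hx0]; exact htx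
  have hf : 0 ≤ 1 / beta a b * x ^ (a - 1) * (1 - x) ^ (b - 1) :=
    mul_nonneg (by positivity) (rpow_nonneg h1x.le _)
  have hg : 0 ≤ 1 / beta (a + b) c * (t / x) ^ (a + b - 1) * (1 - t / x) ^ (c - 1) :=
    mul_nonneg (by positivity) (rpow_nonneg h1tx.le _)
  rw [betaPDF_of_pos_lt_one hx0 hx, betaPDF_of_pos_lt_one (div_pos ht hx0) ((div_lt_one hx0).2 htx),
    ← ENNReal.ofReal_mul hf, ← ENNReal.ofReal_mul (mul_nonneg hf hg),
    ← ENNReal.ofReal_mul (div_nonneg (rpow_nonneg ht.le _) (mul_pos hB₁ hB₂).le),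
    abs_of_pos (inv_pos.2 hx0), one_sub_div hx0.ne']
  congr 1
  calc _ = (1 - x) ^ (b - 1) / (beta a b * beta (a + b) c) *
        (x ^ (a - 1) * (t / x) ^ (a + b - 1) * ((x - t) / x) ^ (c - 1) * x⁻¹) := by ring
    _ = _ := by rw [hpow]; ring

lemma lintegral_betaPDF_mul_betaPDF_div {a b c : ℝ} (ha : 0 < a) (hb : 0 < b) (hc : 0 < c)
    (t : ℝ) :
    ∫⁻ x, betaPDF a b x * betaPDF (a + b) c (t / x) * ENNReal.ofReal |x⁻¹| =
      betaPDF a (b + c) t := by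
  by_cases ht : 0 < t ∧ t < 1
  · obtain ⟨ht0, ht1⟩ := ht
    have hsupp : Function.support (fun x => betaPDF a b x * betaPDF (a + b) c (t / x) *
        ENNReal.ofReal |x⁻¹|) ⊆ Set.Ioo t 1 := by
      refine Function.support_subset_iff'.2 fun x hx => ?_
      rw [betaPDF_mul_betaPDF_div_eq_zero (fun h => hx ⟨h.2.1, h.2.2⟩), zero_mul]
    have hB₁ := beta_pos ha hb
    have hB₂ := beta_pos (add_pos ha hb) hc
    rw [← setLIntegral_eq_of_support_subset hsupp,
      setLIntegral_congr_fun measurableSet_Ioo fun x hx =>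
        betaPDF_mul_betaPDF_div_mul_abs_inv_of_lt ha hb hc ht0 hx.1 hx.2,
      lintegral_const_mul' _ _ ENNReal.ofReal_ne_top,
      lintegral_Ioo_rpow_mul_rpow_mul_rpow hb hc ht0 ht1, ← ENNReal.ofReal_mul (by positivity),
      betaPDF_of_pos_lt_one ht0 ht1, beta_mul_beta_add ha hb hc]
    have hB := beta_pos ha (add_pos hb hc)
    have hB' := beta_pos hb hc
    rw [show t ^ (a - 1) = t ^ (a + b - 1) * t ^ (-b) by rw [← rpow_add ht0]; ring_nf]
    congr 1
    field_simp
  · have hzero : ∀ x, betaPDF a b x * betaPDF (a + b) c (t / x) = 0 := fun x =>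
      betaPDF_mul_betaPDF_div_eq_zero fun h => ht ⟨h.1, h.2.1.trans h.2.2⟩
    simp only [hzero, zero_mul, lintegral_zero]
    rcases not_and_or.1 ht with ht | ht
    · rw [betaPDF_eq_zero_of_nonpos (not_lt.1 ht)]
    · rw [betaPDF_eq_zero_of_one_le (not_lt.1 ht)]

theorem betaMeasure_mconv_betaMeasure {a b c : ℝ} (ha : 0 < a) (hb : 0 < b) (hc : 0 < c) :
    betaMeasure a b ∗ₘ betaMeasure (a + b) c = betaMeasure a (b + c) := by
  rw [betaMeasure, betaMeasure, withDensity_mconv_withDensity (f := betaPDF a b)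
    (g := betaPDF (a + b) c) (measurable_betaPDFReal a b).ennreal_ofReal
    (measurable_betaPDFReal (a + b) c).ennreal_ofReal]
  exact congrArg volume.withDensity (funext (lintegral_betaPDF_mul_betaPDF_div ha hb hc))

variable {Ω : Type*} [MeasurableSpace Ω] {P : Measure Ω}

section CommMonoid

variable {M : Type*} [CommMonoid M] [MeasurableSpace M] [MeasurableMul₂ M]

lemma iIndepFun.indepFun_finsetProd_finsetProd {ι : Type*} {f : ι → Ω → M} (h : iIndepFun f P)
    (hf : ∀ i, Measurable (f i)) {s t : Finset ι} (hst : Disjoint s t) :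
    (∏ i ∈ s, f i) ⟂ᵢ[P] (∏ i ∈ t, f i) := by
  have hprod (u : Finset ι) : Measurable fun v : u → M => ∏ i, v i :=
    Finset.measurable_prod _ fun i _ => measurable_pi_apply i
  convert (h.indepFun_finset s t hst hf).comp (hprod s) (hprod t) using 1 <;>
    ext ω <;> simp only [Finset.prod_apply, Function.comp_apply] <;>
    exact (Finset.prod_attach _ fun i => f i ω).symm

lemma iIndepFun.indepFun_finsetProd_finsetProd_of_subtype {α : Type*} {p : α → Prop}
    {F : α → Ω → M} (h : iIndepFun (fun x : Subtype p => F x) P)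
    (hF : ∀ x, p x → Measurable (F x)) {s t : Finset α} (hs : ∀ x ∈ s, p x)
    (ht : ∀ x ∈ t, p x) (hst : Disjoint s t) :
    (∏ x ∈ s, F x) ⟂ᵢ[P] (∏ x ∈ t, F x) := by
  classical
  have hst' : Disjoint (s.subtype p) (t.subtype p) := Finset.disjoint_left.2 fun x hxs hxt =>
    Finset.disjoint_left.1 hst (Finset.mem_subtype.1 hxs) (Finset.mem_subtype.1 hxt)
  have := h.indepFun_finsetProd_finsetProd (fun x => hF x x.2) hst'
  rwa [Finset.prod_subtype_of_mem _ hs, Finset.prod_subtype_of_mem _ ht] at this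

lemma iIndepFun.indepFun_prod_prod_of_subtype_prod {p : ℕ × ℕ → Prop} {X : ℕ → ℕ → Ω → M}
    (h : iIndepFun (fun q : Subtype p => X q.1.1 q.1.2) P)
    (hX : ∀ q, p q → Measurable (X q.1 q.2)) {K K' : Finset ℕ} {C C' : ℕ → Finset ℕ}
    (hp : ∀ k ∈ K, ∀ i ∈ C k, p (k, i)) (hp' : ∀ k ∈ K', ∀ i ∈ C' k, p (k, i))
    (hdisj : ∀ k ∈ K, ∀ i ∈ C k, k ∈ K' → i ∉ C' k) :
    (∏ k ∈ K, ∏ i ∈ C k, X k i) ⟂ᵢ[P] (∏ k ∈ K', ∏ i ∈ C' k, X k i) := by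
  classical
  have hmem (K : Finset ℕ) (C : ℕ → Finset ℕ) (q : ℕ × ℕ) :
      q ∈ K.biUnion (fun k => {k} ×ˢ C k) ↔ q.1 ∈ K ∧ q.2 ∈ C q.1 := by
    obtain ⟨k, i⟩ := q; simp
  have hprod (K : Finset ℕ) (C : ℕ → Finset ℕ) :
      ∏ q ∈ K.biUnion (fun k => {k} ×ˢ C k), X q.1 q.2 = ∏ k ∈ K, ∏ i ∈ C k, X k i :=
    Finset.prod_finset_product' _ _ _ (hmem K C)
  rw [← hprod, ← hprod]
  refine h.indepFun_finsetProd_finsetProd_of_subtype (F := fun q : ℕ × ℕ => X q.1 q.2) hX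
    (fun q hq => ?_) (fun q hq => ?_) (Finset.disjoint_left.2 fun q hq hq' => ?_)
  · rw [hmem] at hq; exact hp _ hq.1 _ hq.2
  · rw [hmem] at hq; exact hp' _ hq.1 _ hq.2
  · rw [hmem] at hq hq'; exact hdisj _ hq.1 _ hq.2 hq'.1 hq'.2

lemma map_prod_range_eq_of_indepFun [IsFiniteMeasure P] {f g : ℕ → Ω → M} {n : ℕ}
    (hf : ∀ j < n, AEMeasurable (f j) P) (hg : ∀ j < n, AEMeasurable (g j) P)
    (hfi : ∀ j < n, (∏ i ∈ range j, f i) ⟂ᵢ[P] f j)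
    (hgi : ∀ j < n, (∏ i ∈ range j, g i) ⟂ᵢ[P] g j)
    (hfg : ∀ j < n, P.map (f j) = P.map (g j)) :
    P.map (∏ j ∈ range n, f j) = P.map (∏ j ∈ range n, g j) := by
  induction n with
  | zero => rfl
  | succ n ih =>
    have hf' : AEMeasurable (∏ i ∈ range n, f i) P :=
      Finset.aemeasurable_prod _ fun i hi => hf i (by simp at hi; omega)
    have hg' : AEMeasurable (∏ i ∈ range n, g i) P :=
      Finset.aemeasurable_prod _ fun i hi => hg i (by simp at hi; omega)
    rw [prod_range_succ, prod_range_succ,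
      (hfi n n.lt_succ_self).map_mul_eq_map_mconv_map₀ hf' (hf n n.lt_succ_self),
      (hgi n n.lt_succ_self).map_mul_eq_map_mconv_map₀ hg' (hg n n.lt_succ_self),
      ih (fun j hj => hf j (by omega)) (fun j hj => hg j (by omega)) (fun j hj => hfi j (by omega))
        (fun j hj => hgi j (by omega)) (fun j hj => hfg j (by omega)), hfg n n.lt_succ_self]

end CommMonoid

lemma IndepFun.hasLaw_mul_betaMeasure {U V : Ω → ℝ} {a b c : ℝ} (ha : 0 < a) (hb : 0 < b)
    (hc : 0 < c) (hU : HasLaw U (betaMeasure a b) P) (hV : HasLaw V (betaMeasure (a + b) c) P)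
    (hUV : U ⟂ᵢ[P] V) : HasLaw (U * V) (betaMeasure a (b + c)) P := by
  have := isProbabilityMeasureBeta ha hb
  have := isProbabilityMeasureBeta (add_pos ha hb) hc
  simpa only [betaMeasure_mconv_betaMeasure ha hb hc] using hUV.hasLaw_mul hU hV

lemma hasLaw_prod_Icc_betaMeasure {V : ℕ → Ω → ℝ} {α c : ℝ} {j m : ℕ} (hjm : j ≤ m)
    (hα : 0 < α + j * c) (hc : 0 < c)
    (hV : ∀ i ∈ Icc j m, HasLaw (V i) (betaMeasure (α + i * c) c) P)
    (hind : ∀ i ∈ Ico j m, (∏ k ∈ Icc j i, V k) ⟂ᵢ[P] V (i + 1)) :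
    HasLaw (∏ i ∈ Icc j m, V i) (betaMeasure (α + j * c) ((m - j + 1) * c)) P := by
  induction m, hjm using Nat.le_induction with
  | base => simpa using hV j (by simp)
  | succ m hjm ih =>
    have hm : HasLaw (V (m + 1)) (betaMeasure ((α + j * c) + (m - j + 1) * c) c) P := by
      convert hV (m + 1) (by simp; omega) using 2; push_cast; ring
    rw [prod_Icc_succ_top (by omega)]
    convert (hind m (by simp; omega)).hasLaw_mul_betaMeasure hα
      (mul_pos (by linarith [(Nat.cast_le (α := ℝ)).2 hjm]) hc) hc
      (ih (fun i hi => hV i (by simp at hi ⊢; omega))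
        (fun i hi => hind i (by simp at hi ⊢; omega))) hm using 2
    push_cast; ring

section TriangularArray

variable {d : ℕ} {X : ℕ → ℕ → Ω → ℝ}

lemma indepFun_prod_Icc_row
    (hXindep : iIndepFun
      (fun p : {p : ℕ × ℕ // p.1 ≤ d - 2 ∧ p.1 ≤ p.2 ∧ p.2 ≤ d - 2} => X p.1.1 p.1.2) P)
    (hX : ∀ j i : ℕ, j ≤ d - 2 → j ≤ i → i ≤ d - 2 → Measurable (X j i))
    {j i : ℕ} (hji : j ≤ i) (hi : i < d - 2) :
    (∏ k ∈ Icc j i, X j k) ⟂ᵢ[P] X j (i + 1) := by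
  simpa using hXindep.indepFun_prod_prod_of_subtype_prod (fun q hq => hX _ _ hq.1 hq.2.1 hq.2.2)
    (K := {j}) (K' := {j}) (C := fun _ => Icc j i) (C' := fun _ => {i + 1})
    (fun k hk i' hi' => by simp at hk hi'; omega) (fun k hk i' hi' => by simp at hk hi'; omega)
    (fun k _ i' hi' _ => by simp at hi' ⊢; omega)

lemma indepFun_prod_range_prod_Icc_row
    (hXindep : iIndepFun
      (fun p : {p : ℕ × ℕ // p.1 ≤ d - 2 ∧ p.1 ≤ p.2 ∧ p.2 ≤ d - 2} => X p.1.1 p.1.2) P)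
    (hX : ∀ j i : ℕ, j ≤ d - 2 → j ≤ i → i ≤ d - 2 → Measurable (X j i))
    (j : ℕ) :
    (∏ k ∈ range j, ∏ i ∈ Icc k (d - 2), X k i) ⟂ᵢ[P] ∏ i ∈ Icc j (d - 2), X j i := by
  simpa using hXindep.indepFun_prod_prod_of_subtype_prod (fun q hq => hX _ _ hq.1 hq.2.1 hq.2.2)
    (K := range j) (K' := {j}) (C := fun k => Icc k (d - 2)) (C' := fun k => Icc k (d - 2))
    (fun k hk i hi => by simp at hk hi; omega) (fun k hk i hi => by simp at hk hi; omega)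
    (fun k hk _ _ hk' => by simp at hk hk'; omega)

lemma hasLaw_prod_Icc_row {η : ℝ} (hη : 0 < η)
    (hXindep : iIndepFun
      (fun p : {p : ℕ × ℕ // p.1 ≤ d - 2 ∧ p.1 ≤ p.2 ∧ p.2 ≤ d - 2} => X p.1.1 p.1.2) P)
    (hX : ∀ j i : ℕ, j ≤ d - 2 → j ≤ i → i ≤ d - 2 →
      HasBetaDist P (X j i) (η + (i : ℝ) / 2) (1 / 2))
    {j : ℕ} (hj : j < d - 1) :
    HasLaw (∏ i ∈ Icc j (d - 2), X j i) (betaMeasure (η + j / 2) ((d - 1 - j) / 2)) P := by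
  have hrow := hasLaw_prod_Icc_betaMeasure (V := X j) (α := η) (c := 1 / 2) (j := j) (m := d - 2)
    (by omega) (by positivity) (by norm_num)
    (fun i hi => by
      simp only [mem_Icc] at hi
      convert (hX j i (by omega) hi.1 hi.2).hasLaw using 2; ring)
    (fun i hi => by
      simp only [mem_Ico] at hi
      exact indepFun_prod_Icc_row hXindep (fun j i h₁ h₂ h₃ => (hX j i h₁ h₂ h₃).1) hi.1 hi.2)
  convert hrow using 2
  · ring
  · rw [Nat.cast_sub (by omega)]; push_cast; ring

end TriangularArray

end ProbabilityTheory

theorem stmt2_general (η : ℝ) (hη : 1 < η) (d : ℕ)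
    {Ω : Type*} [MeasurableSpace Ω] (P : Measure Ω) [IsProbabilityMeasure P]
    (X : ℕ → ℕ → Ω → ℝ) (Y : ℕ → Ω → ℝ)
    (hXindep : iIndepFun
      (fun p : {p : ℕ × ℕ // p.1 ≤ d - 2 ∧ p.1 ≤ p.2 ∧ p.2 ≤ d - 2} => X p.1.1 p.1.2) P)
    (hX : ∀ j i : ℕ, j ≤ d - 2 → j ≤ i → i ≤ d - 2 →
      HasBetaDist P (X j i) (η + (i : ℝ) / 2) (1 / 2))
    (hYindep : iIndepFun
      (fun j : {j : ℕ // 1 ≤ j ∧ j ≤ d - 1} => Y j) P)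
    (hY : ∀ j : ℕ, 1 ≤ j → j ≤ d - 1 →
      HasBetaDist P (Y j) (η + ((j : ℝ) - 1) / 2) (((d : ℝ) - (j : ℝ)) / 2)) :
    Measure.map (fun ω => ∏ j ∈ Finset.range (d - 1), ∏ i ∈ Finset.Icc j (d - 2), X j i ω) P
      = Measure.map (fun ω => ∏ j ∈ Finset.Icc 1 (d - 1), Y j ω) P := by
  have hXmeas : ∀ j i : ℕ, j ≤ d - 2 → j ≤ i → i ≤ d - 2 → Measurable (X j i) :=
    fun j i h₁ h₂ h₃ => (hX j i h₁ h₂ h₃).1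
  have hYlaw : ∀ j < d - 1,
      HasLaw (Y (1 + j)) (ProbabilityTheory.betaMeasure (η + j / 2) ((d - 1 - j) / 2)) P := by
    intro j hj
    convert (hY (1 + j) (by omega) (by omega)).hasLaw using 2 <;> push_cast <;> ring
  have hYind : ∀ j < d - 1, (∏ i ∈ range j, Y (1 + i)) ⟂ᵢ[P] Y (1 + j) := fun j hj => by
    simpa using hYindep.indepFun_finsetProd_finsetProd_of_subtype (F := Y)
      (fun k hk => (hY k hk.1 hk.2).1) (s := (range j).map (addLeftEmbedding 1)) (t := {1 + j})
      (fun k hk => by simp at hk; omega) (fun k hk => by simp at hk; omega) (by simp)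
  have hrows := fun j (hj : j < d - 1) => hasLaw_prod_Icc_row (by linarith) hXindep hX hj
  have key := map_prod_range_eq_of_indepFun (f := fun j => ∏ i ∈ Icc j (d - 2), X j i)
    (fun j hj => (hrows j hj).aemeasurable) (fun j hj => (hYlaw j hj).aemeasurable)
    (fun j _ => indepFun_prod_range_prod_Icc_row hXindep hXmeas j) hYind
    (fun j hj => (hrows j hj).map_eq.trans (hYlaw j hj).map_eq.symm)
  have hYreindex : ∏ j ∈ range (d - 1), Y (1 + j) = fun ω => ∏ j ∈ Icc 1 (d - 1), Y j ω := by
    ext ω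
    rw [Finset.prod_apply, ← Ico_add_one_right_eq_Icc, prod_Ico_eq_prod_range, Nat.add_sub_cancel]
  rw [hYreindex] at key
  simpa [Finset.prod_fn] using key

theorem stmt2 (η : ℝ) (hη : 1 < η) (d : ℕ) (hd : 2 ≤ d)
    {Ω : Type*} [MeasurableSpace Ω] (P : Measure Ω) [IsProbabilityMeasure P]
    (X : ℕ → ℕ → Ω → ℝ) (Y : ℕ → Ω → ℝ)
    (hXindep : iIndepFun
      (fun p : {p : ℕ × ℕ // p.1 ≤ d - 2 ∧ p.1 ≤ p.2 ∧ p.2 ≤ d - 2} => X p.1.1 p.1.2) P)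
    (hX : ∀ j i : ℕ, j ≤ d - 2 → j ≤ i → i ≤ d - 2 →
      HasBetaDist P (X j i) (η + (i : ℝ) / 2) (1 / 2))
    (hYindep : iIndepFun
      (fun j : {j : ℕ // 1 ≤ j ∧ j ≤ d - 1} => Y j) P)
    (hY : ∀ j : ℕ, 1 ≤ j → j ≤ d - 1 →
      HasBetaDist P (Y j) (η + ((j : ℝ) - 1) / 2) (((d : ℝ) - (j : ℝ)) / 2)) :
    Measure.map (fun ω => ∏ j ∈ Finset.range (d - 1), ∏ i ∈ Finset.Icc j (d - 2), X j i ω) P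
      = Measure.map (fun ω => ∏ j ∈ Finset.Icc 1 (d - 1), Y j ω) P :=
  stmt2_general η hη d P X Y hXindep hX hYindep hY
end

section
/- Fix a real η > 1. For each integer d ≥ 2 let D_d^{(η)} = ∏_{j=1}^{d−1} Y_{d,j}, where Y_{d,1},…,Y_{d,d−1} are independent random variables with Y_{d,j} having the Beta(η + (j−1)/2, (d−j)/2) distribution. Then (D_d^{(η)})^{1/d} converges in probability to the constant 1/e as d → ∞; i.e., for every ε > 0, P(|(D_d^{(η)})^{1/d} − e^{−1}| > ε) → 0. -/
/-!
Write `D = ∏ j, Y j` for `d = m + 1`. By independence and the Beta moments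
`E[Y] = a / (a + b)` and `E[Y⁻¹] = (a + b - 1) / (a - 1)` (finite because `η > 1`),
`E[D] = ∏_{i<m} (2η + i) / (2η + m)` and `E[D⁻¹]` is the reciprocal of the same product at
`2η - 2`. Both products are `exp (-m + o(m))`: their logarithms are sums of
`(i + 1) log ((x + i) / (x + i + 1)) → -1`, so Cesàro applies. Markov's inequality for `D` and
`D⁻¹` then makes `P (D^{1/d} ≥ e⁻¹ + δ) ≤ E[D] / (e⁻¹ + δ)^d` and
`P (D^{1/d} ≤ e⁻¹ - δ) ≤ E[D⁻¹] (e⁻¹ - δ)^d` decay exponentially.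
-/

open MeasureTheory ProbabilityTheory Real Filter Finset

open scoped ENNReal Topology

lemma betaMeasure_eq_withDensity_betaPDF (a b : ℝ) :
    _root_.betaMeasure a b = volume.withDensity (betaPDF a b) := by
  rw [_root_.betaMeasure]
  congr 1
  funext x
  simp only [betaPDF_eq, beta, Set.mem_Ioo, div_eq_inv_mul, mul_one, ← mul_assoc]

lemma ae_mem_Ioo_betaMeasure (a b : ℝ) : ∀ᵐ x ∂_root_.betaMeasure a b, x ∈ Set.Ioo 0 1 := by
  rw [betaMeasure_eq_withDensity_betaPDF, ae_withDensity_iff (by unfold betaPDF; fun_prop)]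
  refine Eventually.of_forall fun x hx => ?_
  by_contra h
  exact hx (by simp [betaPDF_eq, ← Set.mem_Ioo, h])

lemma lintegral_ofReal_rpow_betaMeasure {a b c : ℝ} (hb : 0 < b) (hac : 0 < a + c) :
    ∫⁻ x, ENNReal.ofReal (x ^ c) ∂_root_.betaMeasure a b =
      ENNReal.ofReal (beta (a + c) b / beta a b) := by
  have hdens : ∀ x, betaPDF a b x * ENNReal.ofReal (x ^ c) =
      ENNReal.ofReal (beta (a + c) b / beta a b) * betaPDF (a + c) b x := by
    intro x
    by_cases hx : 0 < x ∧ x < 1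
    · obtain ⟨hx0, hx1⟩ := hx
      have hB := beta_pos hac hb
      have : 0 < 1 - x := by linarith
      rw [betaPDF_of_pos_lt_one hx0 hx1, betaPDF_of_pos_lt_one hx0 hx1,
        ← ENNReal.ofReal_mul' (by positivity), ← ENNReal.ofReal_mul' (by positivity),
        show a + c - 1 = a - 1 + c by ring, rpow_add hx0]
      congr 1
      field_simp
    · simp [betaPDF_eq, hx]
  rw [betaMeasure_eq_withDensity_betaPDF, lintegral_withDensity_eq_lintegral_mul _
    (by unfold betaPDF; fun_prop) (by fun_prop)]
  simp only [Pi.mul_apply, hdens]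
  rw [lintegral_const_mul _ (by unfold betaPDF; fun_prop), lintegral_betaPDF_eq_one hac hb, mul_one]

lemma beta_add_one_div_beta {a b : ℝ} (ha : 0 < a) (hb : 0 < b) :
    beta (a + 1) b / beta a b = a / (a + b) := by
  have := Gamma_pos_of_pos ha
  have := Gamma_pos_of_pos hb
  have := Gamma_pos_of_pos (add_pos ha hb)
  rw [beta, beta, show a + 1 + b = a + b + 1 by ring, Gamma_add_one ha.ne',
    Gamma_add_one (add_pos ha hb).ne']
  field_simp

lemma beta_sub_one_div_beta {a b : ℝ} (ha : 1 < a) (hb : 0 < b) :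
    beta (a - 1) b / beta a b = (a + b - 1) / (a - 1) := by
  have h := beta_add_one_div_beta (sub_pos.2 ha) hb
  rw [sub_add_cancel, show a - 1 + b = a + b - 1 by ring] at h
  have := beta_pos (sub_pos.2 ha) hb
  have := beta_pos (zero_lt_one.trans ha) hb
  have : 0 < a + b - 1 := by linarith
  rw [← inv_div, h, inv_div]

namespace HasBetaDist

variable {Ω : Type*} [MeasurableSpace Ω] {P : Measure Ω} {X : Ω → ℝ} {a b : ℝ}

lemma ae_mem_Ioo (h : HasBetaDist P X a b) : ∀ᵐ ω ∂P, X ω ∈ Set.Ioo 0 1 :=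
  ae_of_ae_map h.1.aemeasurable (h.2 ▸ ae_mem_Ioo_betaMeasure a b)

lemma lintegral_ofReal (h : HasBetaDist P X a b) (ha : 0 < a) (hb : 0 < b) :
    ∫⁻ ω, ENNReal.ofReal (X ω) ∂P = ENNReal.ofReal (a / (a + b)) := by
  rw [← lintegral_map ENNReal.measurable_ofReal h.1, h.2, ← beta_add_one_div_beta ha hb,
    ← lintegral_ofReal_rpow_betaMeasure hb (by linarith)]
  simp_rw [rpow_one]

lemma lintegral_ofReal_inv (h : HasBetaDist P X a b) (ha : 1 < a) (hb : 0 < b) :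
    ∫⁻ ω, ENNReal.ofReal (X ω)⁻¹ ∂P = ENNReal.ofReal ((a + b - 1) / (a - 1)) := by
  rw [← lintegral_map (measurable_inv.ennreal_ofReal) h.1, h.2, ← beta_sub_one_div_beta ha hb,
    sub_eq_add_neg, ← lintegral_ofReal_rpow_betaMeasure hb (by linarith)]
  simp_rw [rpow_neg_one]

end HasBetaDist

section

variable {Ω : Type*} [MeasurableSpace Ω] {P : Measure Ω}

lemma le_or_inv_le_inv_of_lt_abs_rpow_inv_sub {x c ε : ℝ} {n : ℕ} (hx : 0 < x) (hn : n ≠ 0)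
    (hε : 0 < ε) (hεc : ε < c) (h : ε < |x ^ (n : ℝ)⁻¹ - c|) :
    (c + ε) ^ n ≤ x ∨ ((c - ε) ^ n)⁻¹ ≤ x⁻¹ := by
  have hroot : (x ^ (n : ℝ)⁻¹) ^ n = x := rpow_inv_natCast_pow hx.le hn
  rcases lt_abs.1 h with h | h
  · left
    rw [← hroot]
    exact pow_le_pow_left₀ (by linarith) (by linarith) n
  · right
    refine inv_anti₀ hx ?_
    rw [← hroot]
    exact pow_le_pow_left₀ (rpow_nonneg hx.le _) (by linarith) n

lemma measure_lt_abs_rpow_inv_sub_le {X : Ω → ℝ} (hX : AEMeasurable X P)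
    (hpos : ∀ᵐ ω ∂P, 0 < X ω) {n : ℕ} (hn : n ≠ 0) {c ε M₁ M₂ : ℝ} (hε : 0 < ε) (hεc : ε < c)
    (hM₁ : ∫⁻ ω, ENNReal.ofReal (X ω) ∂P = ENNReal.ofReal M₁)
    (hM₂ : ∫⁻ ω, ENNReal.ofReal (X ω)⁻¹ ∂P = ENNReal.ofReal M₂) :
    P {ω | ε < |X ω ^ (n : ℝ)⁻¹ - c|} ≤
      ENNReal.ofReal (M₁ / (c + ε) ^ n) + ENNReal.ofReal (M₂ * (c - ε) ^ n) := by
  have hc₁ : 0 < (c + ε) ^ n := pow_pos (by linarith) n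
  have hc₂ : 0 < ((c - ε) ^ n)⁻¹ := inv_pos.2 (pow_pos (by linarith) n)
  have hsub : {ω | ε < |X ω ^ (n : ℝ)⁻¹ - c|} ≤ᵐ[P]
      ({ω | ENNReal.ofReal ((c + ε) ^ n) ≤ ENNReal.ofReal (X ω)} ∪
        {ω | ENNReal.ofReal ((c - ε) ^ n)⁻¹ ≤ ENNReal.ofReal (X ω)⁻¹} : Set Ω) := by
    filter_upwards [hpos] with ω hω hlt
    exact (le_or_inv_le_inv_of_lt_abs_rpow_inv_sub hω hn hε hεc hlt).imp
      ENNReal.ofReal_le_ofReal ENNReal.ofReal_le_ofReal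
  calc P {ω | ε < |X ω ^ (n : ℝ)⁻¹ - c|}
      ≤ P {ω | ENNReal.ofReal ((c + ε) ^ n) ≤ ENNReal.ofReal (X ω)} +
          P {ω | ENNReal.ofReal ((c - ε) ^ n)⁻¹ ≤ ENNReal.ofReal (X ω)⁻¹} :=
        (measure_mono_ae hsub).trans (measure_union_le _ _)
    _ ≤ ENNReal.ofReal M₁ / ENNReal.ofReal ((c + ε) ^ n) +
          ENNReal.ofReal M₂ / ENNReal.ofReal ((c - ε) ^ n)⁻¹ := by
        rw [← hM₁, ← hM₂]
        gcongr
        · exact meas_ge_le_lintegral_div hX.ennreal_ofReal (by simpa using hc₁)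
            ENNReal.ofReal_ne_top
        · exact meas_ge_le_lintegral_div hX.inv.ennreal_ofReal (by simpa using hc₂)
            ENNReal.ofReal_ne_top
    _ = ENNReal.ofReal (M₁ / (c + ε) ^ n) + ENNReal.ofReal (M₂ * (c - ε) ^ n) := by
        rw [← ENNReal.ofReal_div_of_pos hc₁, ← ENNReal.ofReal_div_of_pos hc₂, div_inv_eq_mul]

lemma lintegral_ofReal_prod_of_iIndepFun {ι : Type*} {p : ι → Prop} (s : Finset ι)
    (hs : ∀ i, i ∈ s ↔ p i) {X : ι → Ω → ℝ} (hX : iIndepFun (fun i : Subtype p => X i) P)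
    (hmeas : ∀ i ∈ s, Measurable (X i)) (hnonneg : ∀ i ∈ s, 0 ≤ᵐ[P] X i) :
    ∫⁻ ω, ENNReal.ofReal (∏ i ∈ s, X i ω) ∂P = ∏ i ∈ s, ∫⁻ ω, ENNReal.ofReal (X i ω) ∂P := by
  classical
  have hp : ∀ i ∈ s, p i := fun i => (hs i).1
  calc ∫⁻ ω, ENNReal.ofReal (∏ i ∈ s, X i ω) ∂P
      = ∫⁻ ω, ∏ i ∈ s.subtype p, ENNReal.ofReal (X i ω) ∂P := by
        refine lintegral_congr_ae ?_
        filter_upwards [(eventually_all_finset s).2 hnonneg] with ω hω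
        rw [prod_subtype_of_mem (fun i => ENNReal.ofReal (X i ω)) hp,
          ENNReal.ofReal_prod_of_nonneg hω]
    _ = ∏ i ∈ s.subtype p, ∫⁻ ω, ENNReal.ofReal (X i ω) ∂P :=
        lintegral_prod_eq_prod_lintegral_of_indepFun _
          (fun (i : Subtype p) ω => ENNReal.ofReal (X i ω))
          (hX.comp _ fun _ => ENNReal.measurable_ofReal)
          fun i => (hmeas i ((hs i).2 i.2)).ennreal_ofReal
    _ = ∏ i ∈ s, ∫⁻ ω, ENNReal.ofReal (X i ω) ∂P :=
        prod_subtype_of_mem (fun i => ∫⁻ ω, ENNReal.ofReal (X i ω) ∂P) hp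

end

lemma prod_Icc_one_eq_prod_range {M : Type*} [CommMonoid M] (f : ℕ → M) (m : ℕ) :
    ∏ j ∈ Icc 1 m, f j = ∏ i ∈ range m, f (i + 1) := by
  rw [range_eq_Ico, prod_Ico_add' f 0 m 1, zero_add, Ico_add_one_right_eq_Icc]

/-- `pochRatio (2 * η) m` is the mean of `D_{m+1}^{(η)}`, and `(pochRatio (2 * η - 2) m)⁻¹` the
mean of its inverse. -/
noncomputable def pochRatio (x : ℝ) (m : ℕ) : ℝ :=
  ∏ i ∈ range m, (x + i) / (x + m)

section pochRatio

variable {x : ℝ}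

lemma pochRatio_pos (hx : 0 < x) (m : ℕ) : 0 < pochRatio x m :=
  prod_pos fun i _ => by positivity

lemma pochRatio_succ (hx : 0 < x) (m : ℕ) :
    pochRatio x (m + 1) = pochRatio x m * ((x + m) / (x + m + 1)) ^ (m + 1) := by
  have : 0 < x + m := by positivity
  simp only [pochRatio, prod_div_distrib, prod_const, card_range, prod_range_succ, div_pow]
  push_cast
  field_simp
  ring

lemma log_pochRatio (hx : 0 < x) (m : ℕ) :
    log (pochRatio x m) = ∑ i ∈ range m, ((i : ℝ) + 1) * log ((x + i) / (x + i + 1)) := by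
  induction m with
  | zero => simp [pochRatio]
  | succ m ih =>
    have : 0 < x + m := by positivity
    rw [pochRatio_succ hx, log_mul (pochRatio_pos hx m).ne' (by positivity), log_pow, ih,
      sum_range_succ]
    push_cast
    ring

lemma tendsto_succ_mul_log_div_succ (hx : 0 < x) :
    Tendsto (fun i : ℕ => ((i : ℝ) + 1) * log ((x + i) / (x + i + 1))) atTop (𝓝 (-1)) := by
  have ht : Tendsto (fun i : ℕ => x + i + 1) atTop atTop :=
    tendsto_atTop_add_const_right _ _ (tendsto_atTop_add_const_left _ _ tendsto_natCast_atTop_atTop)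
  have hratio : Tendsto (fun i : ℕ => ((i : ℝ) + 1) / (x + i + 1)) atTop (𝓝 1) := by
    have h := ((tendsto_inv_atTop_zero.comp ht).const_mul x).const_sub 1
    rw [mul_zero, sub_zero] at h
    refine h.congr fun i => ?_
    have : 0 < x + i + 1 := by positivity
    simp only [Function.comp_apply]
    field_simp
    ring
  -- `(x + i) / (x + i + 1) = 1 - 1 / t` with `t = x + i + 1`, and `t log (1 - 1 / t) → -1`.
  have hlog := (tendsto_mul_log_one_add_div_atTop (-1)).comp ht
  rw [← one_mul (-1 : ℝ)]
  refine (hratio.mul hlog).congr fun i => ?_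
  have : 0 < x + i + 1 := by positivity
  simp only [Function.comp_apply]
  rw [show 1 + -1 / (x + i + 1) = (x + i) / (x + i + 1) by field_simp; ring]
  field_simp

lemma tendsto_log_pochRatio_div (hx : 0 < x) :
    Tendsto (fun m : ℕ => log (pochRatio x m) / m) atTop (𝓝 (-1)) := by
  simpa only [log_pochRatio hx, div_eq_inv_mul] using (tendsto_succ_mul_log_div_succ hx).cesaro

end pochRatio

lemma tendsto_zero_of_tendsto_log_div {u : ℕ → ℝ} {L : ℝ} (hu : ∀ n, 0 < u n) (hL : L < 0)
    (h : Tendsto (fun n : ℕ => log (u n) / n) atTop (𝓝 L)) : Tendsto u atTop (𝓝 0) := by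
  have hlog : Tendsto (fun n => log (u n)) atTop atBot := by
    refine (tendsto_natCast_atTop_atTop.atTop_mul_neg hL h).congr' ?_
    filter_upwards [eventually_ne_atTop 0] with n hn
    field_simp
  exact (tendsto_exp_atBot.comp hlog).congr fun n => exp_log (hu n)

lemma tendsto_pochRatio_div_pow {x c : ℝ} (hx : 0 < x) (hc : exp (-1) < c) :
    Tendsto (fun m => pochRatio x m / c ^ m) atTop (𝓝 0) := by
  have hc0 : 0 < c := (exp_pos _).trans hc
  refine tendsto_zero_of_tendsto_log_div (fun m => by have := pochRatio_pos hx m; positivity)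
    (L := -1 - log c) (by linarith [(lt_log_iff_exp_lt hc0).2 hc])
    (((tendsto_log_pochRatio_div hx).sub_const (log c)).congr' ?_)
  filter_upwards [eventually_ne_atTop 0] with m hm
  rw [log_div (pochRatio_pos hx m).ne' (by positivity), log_pow]
  field_simp

lemma tendsto_inv_pochRatio_mul_pow {x c : ℝ} (hx : 0 < x) (hc0 : 0 < c) (hc : c < exp (-1)) :
    Tendsto (fun m => (pochRatio x m)⁻¹ * c ^ m) atTop (𝓝 0) := by
  have h := (tendsto_log_pochRatio_div hx).neg.add_const (log c)
  rw [neg_neg] at h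
  refine tendsto_zero_of_tendsto_log_div (fun m => by have := pochRatio_pos hx m; positivity)
    (by linarith [(log_lt_iff_lt_exp hc0).2 hc]) (h.congr' ?_)
  filter_upwards [eventually_ne_atTop 0] with m hm
  rw [log_mul (inv_pos.2 (pochRatio_pos hx m)).ne' (by positivity), log_inv, log_pow]
  field_simp

section Determinant

variable {Ω : Type*} [MeasurableSpace Ω] {P : Measure Ω} {η : ℝ} {m : ℕ} {Y : ℕ → Ω → ℝ}

lemma lintegral_ofReal_prod_eq_pochRatio (hη : 0 < η)
    (hindep : iIndepFun (fun j : {j : ℕ // 1 ≤ j ∧ j ≤ m} => Y j) P)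
    (hY : ∀ j ∈ Icc 1 m, HasBetaDist P (Y j) (η + ((j : ℝ) - 1) / 2) (((m : ℝ) + 1 - j) / 2)) :
    ∫⁻ ω, ENNReal.ofReal (∏ j ∈ Icc 1 m, Y j ω) ∂P = ENNReal.ofReal (pochRatio (2 * η) m) := by
  have hmoment : ∀ j ∈ Icc 1 m, ∫⁻ ω, ENNReal.ofReal (Y j ω) ∂P =
      ENNReal.ofReal ((2 * η + (j - 1 : ℝ)) / (2 * η + m)) := by
    intro j hj
    have hj1 : (1 : ℝ) ≤ j := by exact_mod_cast (mem_Icc.1 hj).1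
    have hjm : (j : ℝ) ≤ m := by exact_mod_cast (mem_Icc.1 hj).2
    rw [(hY j hj).lintegral_ofReal (by linarith) (by linarith)]
    congr 1
    rw [div_eq_div_iff (by linarith) (by linarith)]
    ring
  rw [lintegral_ofReal_prod_of_iIndepFun (Icc 1 m) (fun _ => mem_Icc) hindep
      (fun j hj => (hY j hj).1) (fun j hj => (hY j hj).ae_mem_Ioo.mono fun ω h => h.1.le),
    prod_congr rfl hmoment, prod_Icc_one_eq_prod_range, pochRatio,
    ENNReal.ofReal_prod_of_nonneg fun i _ => by positivity]
  push_cast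
  simp only [add_sub_cancel_right]

lemma lintegral_ofReal_inv_prod_eq_inv_pochRatio (hη : 1 < η)
    (hindep : iIndepFun (fun j : {j : ℕ // 1 ≤ j ∧ j ≤ m} => Y j) P)
    (hY : ∀ j ∈ Icc 1 m, HasBetaDist P (Y j) (η + ((j : ℝ) - 1) / 2) (((m : ℝ) + 1 - j) / 2)) :
    ∫⁻ ω, ENNReal.ofReal (∏ j ∈ Icc 1 m, Y j ω)⁻¹ ∂P =
      ENNReal.ofReal (pochRatio (2 * η - 2) m)⁻¹ := by
  have hmoment : ∀ j ∈ Icc 1 m, ∫⁻ ω, ENNReal.ofReal (Y j ω)⁻¹ ∂P =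
      ENNReal.ofReal ((2 * η - 2 + (j - 1 : ℝ)) / (2 * η - 2 + m))⁻¹ := by
    intro j hj
    have hj1 : (1 : ℝ) ≤ j := by exact_mod_cast (mem_Icc.1 hj).1
    have hjm : (j : ℝ) ≤ m := by exact_mod_cast (mem_Icc.1 hj).2
    rw [(hY j hj).lintegral_ofReal_inv (by linarith) (by linarith), inv_div]
    congr 1
    rw [div_eq_div_iff (by linarith) (by linarith)]
    ring
  have hindep_inv : iIndepFun (fun j : {j : ℕ // 1 ≤ j ∧ j ≤ m} => fun ω => (Y j ω)⁻¹) P :=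
    hindep.comp _ fun _ => measurable_inv
  have hx : 0 < 2 * η - 2 := by linarith
  simp only [← prod_inv_distrib]
  rw [lintegral_ofReal_prod_of_iIndepFun (X := fun j ω => (Y j ω)⁻¹) (Icc 1 m) (fun _ => mem_Icc)
      hindep_inv (fun j hj => (hY j hj).1.inv)
      (fun j hj => (hY j hj).ae_mem_Ioo.mono fun ω h => inv_nonneg.2 h.1.le),
    prod_congr rfl hmoment, prod_Icc_one_eq_prod_range, pochRatio, ← prod_inv_distrib,
    ENNReal.ofReal_prod_of_nonneg fun i _ => by positivity]
  push_cast
  simp only [add_sub_cancel_right]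

lemma measure_lt_abs_prod_rpow_inv_sub_le (hη : 1 < η)
    (hindep : iIndepFun (fun j : {j : ℕ // 1 ≤ j ∧ j ≤ m} => Y j) P)
    (hY : ∀ j ∈ Icc 1 m, HasBetaDist P (Y j) (η + ((j : ℝ) - 1) / 2) (((m : ℝ) + 1 - j) / 2))
    {c δ : ℝ} (hδ : 0 < δ) (hδc : δ < c) :
    P {ω | δ < |(∏ j ∈ Icc 1 m, Y j ω) ^ ((m + 1 : ℕ) : ℝ)⁻¹ - c|} ≤
      ENNReal.ofReal (pochRatio (2 * η) m / (c + δ) ^ (m + 1)) +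
      ENNReal.ofReal ((pochRatio (2 * η - 2) m)⁻¹ * (c - δ) ^ (m + 1)) := by
  have hpos : ∀ᵐ ω ∂P, 0 < ∏ j ∈ Icc 1 m, Y j ω :=
    ((eventually_all_finset _).2 fun j hj => (hY j hj).ae_mem_Ioo).mono
      fun ω h => prod_pos fun j hj => (h j hj).1
  exact measure_lt_abs_rpow_inv_sub_le
    (Finset.measurable_prod _ fun j hj => (hY j hj).1).aemeasurable hpos m.succ_ne_zero hδ hδc
    (lintegral_ofReal_prod_eq_pochRatio (by linarith) hindep hY)
    (lintegral_ofReal_inv_prod_eq_inv_pochRatio hη hindep hY)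

end Determinant

theorem stmt6_general (η : ℝ) (hη : 1 < η)
    {Ω : Type*} [MeasurableSpace Ω] (P : Measure Ω)
    (Y : ℕ → ℕ → Ω → ℝ)
    (hindep : ∀ d : ℕ, 2 ≤ d →
      iIndepFun
        (fun j : {j : ℕ // 1 ≤ j ∧ j ≤ d - 1} => Y d j) P)
    (hY : ∀ d j : ℕ, 2 ≤ d → 1 ≤ j → j ≤ d - 1 →
      HasBetaDist P (Y d j) (η + ((j : ℝ) - 1) / 2) (((d : ℝ) - (j : ℝ)) / 2)) :
    ∀ ε : ℝ, 0 < ε →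
      Tendsto (fun d : ℕ =>
          P {ω | ε < |(∏ j ∈ Finset.Icc 1 (d - 1), Y d j ω) ^ ((d : ℝ)⁻¹) - Real.exp (-1)|})
        atTop (nhds 0) := by
  intro ε hε
  -- Shrinking `ε` keeps `exp (-1) - δ` positive, as the lower-tail bound needs.
  obtain ⟨δ, hδ, hδε, hδe⟩ : ∃ δ, 0 < δ ∧ δ ≤ ε ∧ δ < exp (-1) :=
    ⟨min ε (exp (-1) / 2), lt_min hε (by positivity), min_le_left _ _,
      (min_le_right _ _).trans_lt (half_lt_self (exp_pos _))⟩
  refine tendsto_of_tendsto_of_tendsto_of_le_of_le tendsto_const_nhds ?_ (fun _ => zero_le)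
    fun d => measure_mono fun ω hω => hδε.trans_lt hω
  have h₁ := (tendsto_pochRatio_div_pow (x := 2 * η) (by linarith)
    (lt_add_of_pos_right _ hδ)).div_const (exp (-1) + δ)
  have h₂ := (tendsto_inv_pochRatio_mul_pow (x := 2 * η - 2) (by linarith) (sub_pos.2 hδe)
    (sub_lt_self _ hδ)).mul_const (exp (-1) - δ)
  have hlim := (ENNReal.tendsto_ofReal h₁).add (ENNReal.tendsto_ofReal h₂)
  simp only [zero_div, zero_mul, ENNReal.ofReal_zero, add_zero, div_div, mul_assoc,
    ← pow_succ] at hlim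
  rw [← tendsto_add_atTop_iff_nat 1]
  refine tendsto_of_tendsto_of_tendsto_of_le_of_le' tendsto_const_nhds hlim
    (Eventually.of_forall fun _ => zero_le) (eventually_atTop.2 ⟨1, fun m hm => ?_⟩)
  have hY_m : ∀ j ∈ Icc 1 m,
      HasBetaDist P (Y (m + 1) j) (η + ((j : ℝ) - 1) / 2) (((m : ℝ) + 1 - j) / 2) := by
    intro j hj
    have h := hY (m + 1) j (by omega) (mem_Icc.1 hj).1 (by have := (mem_Icc.1 hj).2; omega)
    push_cast at h
    exact h
  have hindep_m := hindep (m + 1) (by omega)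
  simp only [Nat.add_sub_cancel] at hindep_m ⊢
  exact measure_lt_abs_prod_rpow_inv_sub_le hη hindep_m hY_m hδ hδe

theorem stmt6 (η : ℝ) (hη : 1 < η)
    {Ω : Type*} [MeasurableSpace Ω] (P : Measure Ω) [IsProbabilityMeasure P]
    (Y : ℕ → ℕ → Ω → ℝ)
    (hindep : ∀ d : ℕ, 2 ≤ d →
      iIndepFun
        (fun j : {j : ℕ // 1 ≤ j ∧ j ≤ d - 1} => Y d j) P)
    (hY : ∀ d j : ℕ, 2 ≤ d → 1 ≤ j → j ≤ d - 1 →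
      HasBetaDist P (Y d j) (η + ((j : ℝ) - 1) / 2) (((d : ℝ) - (j : ℝ)) / 2)) :
    ∀ ε : ℝ, 0 < ε →
      Tendsto (fun d : ℕ =>
          P {ω | ε < |(∏ j ∈ Finset.Icc 1 (d - 1), Y d j ω) ^ ((d : ℝ)⁻¹) - Real.exp (-1)|})
        atTop (nhds 0) :=
  stmt6_general η hη P Y hindep hY
end
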